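/- arXiv:2409.15597 — 7 statements merged into one kernel-verified Lean document; each statement's English description precedes it below -/
import Mathlib

section
/- Fix σ > 0. For every sequence of parameter pairs (μ_m, 𝒯_m) with μ_m → ∞, 𝒯_m → ∞ and √(log 𝒯_m)/μ_m → 0: in the change-point model with change after time τ (X_1,…,X_τ i.i.d. N(0,1), X_{τ+1},…,X_{𝒯_m} i.i.d. N(μ_m, σ²), all independent) and CUSUM drift parameter μ_m, the supremum over integers 1 ≤ τ ≤ t ≤ 𝒯_m of P(max_{0≤k<τ} V_{t,k} ≥ max_{τ≤k≤t} V_{t,k}) tends to 0 as m → ∞; in particular the maximizer of k ↦ V_{t,k} over 0 ≤ k ≤ t lies in {τ,…,t} with probability tending to 1 uniformly in τ and t. -/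
/-! If the CUSUM statistic at some pre-change index `k < τ` is at least its value at `τ`, the
increments `X (k+1), …, X τ` sum to at least `μ (τ - k) / 2`, so one of these `N(0,1)` variables
exceeds `μ / 2`. A union bound and the Chernoff bound `P(N(0,1) ≥ μ/2) ≤ exp (-μ²/8)` bound the
probability by `𝒯 exp (-μ²/8)`, and `√(log 𝒯) / μ → 0` makes `log 𝒯 ≤ μ² / 16` eventually, so
the bound is at most `exp (-μ²/16) → 0`. -/

open MeasureTheory ProbabilityTheory Filter Real

noncomputable section

/-- Partial sums of a path: `pS X 0 = 0`, `pS X t = X 1 + ⋯ + X t`. -/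
def pS (X : ℕ → ℝ) (t : ℕ) : ℝ := ∑ i ∈ Finset.Icc 1 t, X i

/-- CUSUM quantity `V_{t,k}` with drift parameter μ. -/
def cusumV (μ : ℝ) (X : ℕ → ℝ) (t k : ℕ) : ℝ :=
  (pS X t - pS X k - μ / 2 * ((t : ℝ) - (k : ℝ))) * μ

open Finset in
lemma pS_sub_pS (X : ℕ → ℝ) {k j : ℕ} (hkj : k ≤ j) :
    pS X j - pS X k = ∑ i ∈ Ioc k j, X i := by
  have hIcc : ∀ s : ℕ, Icc 1 s = Ioc 0 s := fun s => Icc_add_one_left_eq_Ioc 0 s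
  rw [pS, pS, hIcc, hIcc, ← sum_Ioc_consecutive X (Nat.zero_le k) hkj, add_sub_cancel_left]

open Finset in
lemma cusumV_sub_cusumV (μ : ℝ) (X : ℕ → ℝ) (t : ℕ) {k j : ℕ} (hkj : k ≤ j) :
    cusumV μ X t k - cusumV μ X t j = μ * ∑ i ∈ Ioc k j, (X i - μ / 2) := by
  rw [sum_sub_distrib, ← pS_sub_pS X hkj, sum_const, Nat.card_Ioc, nsmul_eq_mul,
    Nat.cast_sub hkj, cusumV, cusumV]
  ring

lemma exists_half_le_of_cusumV_le {μ : ℝ} (hμ : 0 < μ) (X : ℕ → ℝ) (t : ℕ) {k j : ℕ}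
    (hkj : k < j) (h : cusumV μ X t j ≤ cusumV μ X t k) :
    ∃ i ∈ Finset.Ioc k j, μ / 2 ≤ X i := by
  by_contra! hlt
  have hneg : ∑ i ∈ Finset.Ioc k j, (X i - μ / 2) < 0 :=
    Finset.sum_neg (fun i hi => sub_neg.mpr (hlt i hi)) (Finset.nonempty_Ioc.mpr hkj)
  have hdiff := cusumV_sub_cusumV μ X t hkj.le
  nlinarith [mul_neg_of_pos_of_neg hμ hneg]

lemma exists_half_le_of_iSup_cusumV_le {μ : ℝ} (hμ : 0 < μ) (X : ℕ → ℝ) {τ t : ℕ}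
    (hτ : 1 ≤ τ) (hτt : τ ≤ t)
    (h : (⨆ k : (Finset.Icc τ t : Finset ℕ), cusumV μ X t k) ≤ ⨆ k : Fin τ, cusumV μ X t k) :
    ∃ i ∈ Finset.Icc 1 τ, μ / 2 ≤ X i := by
  have : Nonempty (Fin τ) := ⟨⟨0, hτ⟩⟩
  obtain ⟨k, hk⟩ := exists_eq_ciSup_of_finite (f := fun k : Fin τ => cusumV μ X t k)
  have hτ_le : cusumV μ X t τ ≤ ⨆ k : (Finset.Icc τ t : Finset ℕ), cusumV μ X t k :=
    le_ciSup (f := fun k : (Finset.Icc τ t : Finset ℕ) => cusumV μ X t k)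
      (Set.finite_range _).bddAbove ⟨τ, Finset.mem_Icc.mpr ⟨le_rfl, hτt⟩⟩
  obtain ⟨i, hi, hle⟩ := exists_half_le_of_cusumV_le hμ X t k.isLt (hk ▸ hτ_le.trans h)
  obtain ⟨hki, hiτ⟩ := Finset.mem_Ioc.mp hi
  exact ⟨i, Finset.mem_Icc.mpr ⟨by omega, hiτ⟩, hle⟩

lemma measureReal_ge_le_exp_of_map_eq_gaussianReal {Ω : Type*} [MeasurableSpace Ω]
    {P : Measure Ω} [IsProbabilityMeasure P] {X : Ω → ℝ} {v : NNReal}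
    (hX : P.map X = gaussianReal 0 v) {a : ℝ} (ha : 0 ≤ a) :
    P.real {ω | a ≤ X ω} ≤ exp (-a ^ 2 / (2 * v)) := by
  rcases eq_or_ne (v : ℝ) 0 with hv | hv
  · simp [hv, measureReal_le_one]
  have hXm : AEMeasurable X P := aemeasurable_of_map_neZero (by rw [hX]; infer_instance)
  have hint : Integrable (fun ω => exp (a / v * X ω)) P := by
    have hmap := integrable_exp_mul_gaussianReal (μ := 0) (v := v) (a / v)
    rw [← hX] at hmap
    exact (integrable_map_measure (by fun_prop) hXm).mp hmap
  calc P.real {ω | a ≤ X ω} ≤ exp (-(a / v) * a) * mgf X P (a / v) :=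
        measure_ge_le_exp_mul_mgf a (by positivity) hint
    _ = exp (-a ^ 2 / (2 * v)) := by
        rw [mgf_gaussianReal hX, ← exp_add]
        congr 1
        field_simp
        ring

lemma measureReal_iSup_cusumV_le_iSup_le {Ω : Type*} [MeasurableSpace Ω] (P : Measure Ω)
    [IsProbabilityMeasure P] (X : ℕ → Ω → ℝ) {μ : ℝ} (hμ : 0 < μ) {τ t : ℕ}
    (hτ : 1 ≤ τ) (hτt : τ ≤ t)
    (hpre : ∀ i, 1 ≤ i → i ≤ τ → P.map (X i) = gaussianReal 0 1) :
    P.real {ω | (⨆ k : (Finset.Icc τ t : Finset ℕ), cusumV μ (fun i => X i ω) t k)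
        ≤ ⨆ k : Fin τ, cusumV μ (fun i => X i ω) t k} ≤ τ * exp (-μ ^ 2 / 8) := by
  have hsub : {ω | (⨆ k : (Finset.Icc τ t : Finset ℕ), cusumV μ (fun i => X i ω) t k)
        ≤ ⨆ k : Fin τ, cusumV μ (fun i => X i ω) t k}
      ⊆ ⋃ i ∈ Finset.Icc 1 τ, {ω | μ / 2 ≤ X i ω} := fun ω hω => by
    simpa using exists_half_le_of_iSup_cusumV_le hμ (fun i => X i ω) hτ hτt hω
  calc _ ≤ P.real (⋃ i ∈ Finset.Icc 1 τ, {ω | μ / 2 ≤ X i ω}) :=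
        measureReal_mono hsub (measure_ne_top _ _)
    _ ≤ ∑ i ∈ Finset.Icc 1 τ, P.real {ω | μ / 2 ≤ X i ω} := measureReal_biUnion_finset_le _ _
    _ ≤ ∑ _i ∈ Finset.Icc 1 τ, exp (-μ ^ 2 / 8) := by
        refine Finset.sum_le_sum fun i hi => ?_
        obtain ⟨h1i, hiτ⟩ := Finset.mem_Icc.mp hi
        refine (measureReal_ge_le_exp_of_map_eq_gaussianReal (hpre i h1i hiτ)
          (by positivity)).trans_eq ?_
        push_cast
        ring_nf
    _ = τ * exp (-μ ^ 2 / 8) := by simp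

lemma tendsto_natCast_mul_exp_neg_sq_div_eight {μs : ℕ → ℝ} {Ts : ℕ → ℕ}
    (hμ : Tendsto μs atTop atTop)
    (hrate : Tendsto (fun m => √(log (Ts m : ℝ)) / μs m) atTop (nhds 0)) :
    Tendsto (fun m => (Ts m : ℝ) * exp (-μs m ^ 2 / 8)) atTop (nhds 0) := by
  have hexp : Tendsto (fun m => exp (-μs m ^ 2 / 16)) atTop (nhds 0) := by
    refine tendsto_exp_atBot.comp (Tendsto.atBot_div_const (by norm_num) ?_)
    exact tendsto_neg_atTop_atBot.comp ((tendsto_pow_atTop two_ne_zero).comp hμ)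
  refine squeeze_zero' (.of_forall fun m => by positivity) ?_ hexp
  filter_upwards [hμ.eventually_gt_atTop 0,
    hrate.eventually (gt_mem_nhds (by norm_num : (0 : ℝ) < 1 / 4))] with m hμm hrm
  have hlog : log (Ts m : ℝ) ≤ μs m ^ 2 / 16 := by
    have := (sqrt_lt' (by positivity)).mp ((div_lt_iff₀ hμm).mp hrm)
    nlinarith
  calc (Ts m : ℝ) * exp (-μs m ^ 2 / 8) ≤ exp (μs m ^ 2 / 16) * exp (-μs m ^ 2 / 8) := by
        gcongr
        exact (le_exp_log _).trans (exp_le_exp.mpr hlog)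
    _ = exp (-μs m ^ 2 / 16) := by rw [← exp_add]; ring_nf

theorem statement6_general (σ : ℝ) (μs : ℕ → ℝ) (Ts : ℕ → ℕ)
    (hμ : Tendsto μs atTop atTop)
    (hrate : Tendsto (fun m => Real.sqrt (Real.log (Ts m : ℝ)) / μs m) atTop (nhds 0)) :
    ∀ ε : ℝ, 0 < ε → ∃ M : ℕ, ∀ m : ℕ, M ≤ m →
      ∀ τ t : ℕ, 1 ≤ τ → τ ≤ t → t ≤ Ts m →
      ∀ (Ω : Type) [MeasurableSpace Ω] (P : Measure Ω) [IsProbabilityMeasure P]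
        (X : ℕ → Ω → ℝ), (∀ i, Measurable (X i)) →
      iIndepFun (fun i : ↥(Set.Icc 1 (Ts m)) => X (i : ℕ)) P →
      (∀ i, 1 ≤ i → i ≤ τ → Measure.map (X i) P = gaussianReal 0 1) →
      (∀ i, τ < i → i ≤ Ts m → Measure.map (X i) P = gaussianReal (μs m) ((σ ^ 2).toNNReal)) →
      (P {ω | (⨆ k : (Finset.Icc τ t : Finset ℕ), cusumV (μs m) (fun i => X i ω) t (k : ℕ)) ≤ ⨆ k : Fin τ, cusumV (μs m) (fun i => X i ω) t (k : ℕ)}).toReal ≤ ε := by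
  intro ε hε
  obtain ⟨M, hM⟩ := eventually_atTop.mp ((hμ.eventually_gt_atTop 0).and
    ((tendsto_natCast_mul_exp_neg_sq_div_eight hμ hrate).eventually (ge_mem_nhds hε)))
  refine ⟨M, fun m hm τ t hτ hτt htT Ω _ P _ X _ _ hpre _ => ?_⟩
  obtain ⟨hμm, hbound⟩ := hM m hm
  calc _ ≤ τ * exp (-μs m ^ 2 / 8) := measureReal_iSup_cusumV_le_iSup_le P X hμm hτ hτt hpre
    _ ≤ Ts m * exp (-μs m ^ 2 / 8) := by gcongr; exact_mod_cast hτt.trans htT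
    _ ≤ ε := hbound

/-- with μ_m → ∞, 𝒯_m → ∞, √(log 𝒯_m)/μ_m → 0, the probability that the CUSUM maximum over pre-change indices 0 ≤ k < τ dominates the maximum over post-change indices τ ≤ k ≤ t tends to 0 uniformly in 1 ≤ τ ≤ t ≤ 𝒯_m. -/
theorem statement6 (σ : ℝ) (hσ : 0 < σ) (μs : ℕ → ℝ) (Ts : ℕ → ℕ)
    (hμ : Tendsto μs atTop atTop) (hT : Tendsto Ts atTop atTop)
    (hrate : Tendsto (fun m => Real.sqrt (Real.log (Ts m : ℝ)) / μs m) atTop (nhds 0)) :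
    ∀ ε : ℝ, 0 < ε → ∃ M : ℕ, ∀ m : ℕ, M ≤ m →
      ∀ τ t : ℕ, 1 ≤ τ → τ ≤ t → t ≤ Ts m →
      ∀ (Ω : Type) [MeasurableSpace Ω] (P : Measure Ω) [IsProbabilityMeasure P]
        (X : ℕ → Ω → ℝ), (∀ i, Measurable (X i)) →
      iIndepFun (fun i : ↥(Set.Icc 1 (Ts m)) => X (i : ℕ)) P →
      (∀ i, 1 ≤ i → i ≤ τ → Measure.map (X i) P = gaussianReal 0 1) →
      (∀ i, τ < i → i ≤ Ts m → Measure.map (X i) P = gaussianReal (μs m) ((σ ^ 2).toNNReal)) →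
      (P {ω | (⨆ k : (Finset.Icc τ t : Finset ℕ), cusumV (μs m) (fun i => X i ω) t (k : ℕ)) ≤ ⨆ k : Fin τ, cusumV (μs m) (fun i => X i ω) t (k : ℕ)}).toReal ≤ ε :=
  statement6_general σ μs Ts hμ hrate

end
end

section
/- Fix σ > 0. For every sequence of parameter pairs (μ_m, 𝒯_m) with μ_m → ∞, 𝒯_m → ∞ and √(log 𝒯_m)/μ_m → 0: in the change-point model with change after time τ (X_1,…,X_τ i.i.d. N(0,1), X_{τ+1},…,X_{𝒯_m} i.i.d. N(μ_m, σ²), all independent) and CUSUM drift parameter μ_m, the supremum over integers 1 ≤ τ ≤ t ≤ 𝒯_m of P(Y_t^LR ≠ V_{t,τ}) tends to 0 as m → ∞; i.e., with probability tending to 1 uniformly in τ and t, the CUSUM maximum is attained at the change point k = τ. -/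
open MeasureTheory ProbabilityTheory Filter Real
open scoped NNReal Topology

noncomputable section

/-- CUSUM statistic `Y_t^LR = max_{0 ≤ k ≤ t} V_{t,k}`. -/
def Ylr (μ : ℝ) (X : ℕ → ℝ) (t : ℕ) : ℝ := ⨆ k : Fin (t + 1), cusumV μ X t (k : ℕ)

/-!
Since `V_{t,k} - V_{t,τ} = μ (S_τ - S_k - μ (τ - k) / 2)`, the maximum is missed only if for
some `k ≠ τ` a sum of `|τ - k|` independent Gaussians deviates from its mean by `μ |τ - k| / 2`
(upwards if `k < τ`, downwards if `k > τ`). Hoeffding's bound for sub-Gaussian sums gives this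
probability at most `r ^ |τ - k|` with `r = exp (-c μ²)`, `c = min (1/8) (1/(8σ²))`, and the union
bound over `k` then gives `2 r / (1 - r)`, a bound independent of `τ`, `t` and `𝒯` that tends to
`0` as `μ → ∞`.
-/

section Hoeffding

variable {Ω ι : Type*} [MeasurableSpace Ω] {P : Measure Ω}

lemma hasSubgaussianMGF_id_gaussianReal (v : ℝ≥0) :
    HasSubgaussianMGF id v (gaussianReal 0 v) where
  integrable_exp_mul t := integrable_exp_mul_gaussianReal t
  mgf_le t := by simp [mgf_id_gaussianReal]

lemma hasSubgaussianMGF_sub_of_map_eq_gaussianReal {X : Ω → ℝ} (hX : Measurable X) {ν : ℝ}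
    {v : ℝ≥0} (h : P.map X = gaussianReal ν v) :
    HasSubgaussianMGF (fun ω => X ω - ν) v P := by
  have hlaw : P.map (fun ω => X ω - ν) = gaussianReal 0 v := by
    rw [← Function.comp_def (· - ν) X, ← Measure.map_map (measurable_sub_const ν) hX, h,
      gaussianReal_map_sub_const, sub_self]
  rw [← HasSubgaussianMGF.id_map_iff (hX.sub_const ν).aemeasurable, hlaw]
  exact hasSubgaussianMGF_id_gaussianReal v

lemma measureReal_sum_ge_le_of_iIndepFun_subtype {Y : ι → Ω → ℝ} {S : Set ι}
    (hind : iIndepFun (fun i : S => Y i) P) {s : Finset ι} (hs : ∀ i ∈ s, i ∈ S) {c : ℝ≥0}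
    (hY : ∀ i ∈ s, HasSubgaussianMGF (Y i) c P) {ε : ℝ} (hε : 0 ≤ ε) :
    P.real {ω | ε ≤ ∑ i ∈ s, Y i ω} ≤ exp (-ε ^ 2 / (2 * s.card * c)) := by
  classical
  have h := HasSubgaussianMGF.measure_sum_ge_le_of_iIndepFun hind (c := fun _ => c)
    (s := s.subtype (· ∈ S)) (fun i hi => hY i (Finset.mem_subtype.mp hi)) hε
  have hsum : ∀ ω, ∑ i ∈ s.subtype (· ∈ S), Y i ω = ∑ i ∈ s, Y i ω :=
    fun ω => Finset.sum_subtype_of_mem (fun i => Y i ω) hs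
  simpa [hsum, Finset.card_subtype, Finset.filter_true_of_mem hs, mul_assoc] using h

end Hoeffding

lemma pS_sub_pS_s9 (X : ℕ → ℝ) {a b : ℕ} (h : a ≤ b) :
    pS X b - pS X a = ∑ i ∈ Finset.Ioc a b, X i := by
  have hIoc : ∀ n, pS X n = ∑ i ∈ Finset.Ioc 0 n, X i := fun _ => rfl
  rw [hIoc, hIoc, ← Finset.sum_Ioc_consecutive X (Nat.zero_le a) h, add_sub_cancel_left]

lemma cusumV_lt_cusumV_iff {μ : ℝ} (hμ : 0 < μ) (X : ℕ → ℝ) (t τ k : ℕ) :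
    cusumV μ X t τ < cusumV μ X t k ↔ μ / 2 * ((τ : ℝ) - k) < pS X τ - pS X k := by
  rw [← sub_pos, show cusumV μ X t k - cusumV μ X t τ
      = (pS X τ - pS X k - μ / 2 * ((τ : ℝ) - k)) * μ by unfold cusumV; ring,
    mul_pos_iff_of_pos_right hμ, sub_pos]

lemma exists_cusumV_lt_of_Ylr_ne {μ : ℝ} {X : ℕ → ℝ} {t τ : ℕ} (hτt : τ ≤ t)
    (h : Ylr μ X t ≠ cusumV μ X t τ) :
    ∃ k ∈ Finset.range (t + 1), cusumV μ X t τ < cusumV μ X t k := by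
  obtain ⟨k, hk⟩ := exists_eq_ciSup_of_finite (f := fun k : Fin (t + 1) => cusumV μ X t k)
  have hle : cusumV μ X t τ ≤ Ylr μ X t :=
    le_ciSup (f := fun k : Fin (t + 1) => cusumV μ X t k) (Set.finite_range _).bddAbove
      ⟨τ, by omega⟩
  refine ⟨k, Finset.mem_range.mpr k.isLt, ?_⟩
  rw [hk]
  exact hle.lt_of_ne (Ne.symm h)

lemma sum_range_pow_succ_le {r : ℝ} (hr0 : 0 ≤ r) (hr1 : r < 1) (n : ℕ) :
    ∑ j ∈ Finset.range n, r ^ (j + 1) ≤ r / (1 - r) := by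
  have := geom_sum_Ico_le_of_lt_one (m := 1) (n := n + 1) hr0 hr1
  simpa [Finset.sum_Ico_eq_sum_range, add_comm] using this

lemma sum_range_succ_le_of_two_sided_geometric {r : ℝ} (hr0 : 0 ≤ r) (hr1 : r < 1)
    {b : ℕ → ℝ} {τ t : ℕ} (hτt : τ ≤ t) (hτ : b τ = 0) (hlt : ∀ k < τ, b k ≤ r ^ (τ - k))
    (hgt : ∀ k, τ < k → k ≤ t → b k ≤ r ^ (k - τ)) :
    ∑ k ∈ Finset.range (t + 1), b k ≤ 2 * r / (1 - r) := by
  have hbefore : ∑ k ∈ Finset.range τ, b k ≤ r / (1 - r) := calc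
    _ ≤ ∑ k ∈ Finset.range τ, r ^ (τ - k) :=
      Finset.sum_le_sum fun k hk => hlt k (Finset.mem_range.mp hk)
    _ = ∑ j ∈ Finset.range τ, r ^ (j + 1) := by
      rw [← Finset.sum_range_reflect]
      exact Finset.sum_congr rfl fun j hj => by
        rw [show τ - (τ - 1 - j) = j + 1 by have := Finset.mem_range.mp hj; omega]
    _ ≤ r / (1 - r) := sum_range_pow_succ_le hr0 hr1 τ
  have hafter : ∑ k ∈ Finset.Ico (τ + 1) (t + 1), b k ≤ r / (1 - r) := calc
    _ ≤ ∑ k ∈ Finset.Ico (τ + 1) (t + 1), r ^ (k - τ) :=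
      Finset.sum_le_sum fun k hk => by
        have := Finset.mem_Ico.mp hk
        exact hgt k (by omega) (by omega)
    _ = ∑ j ∈ Finset.range (t - τ), r ^ (j + 1) := by
      rw [Finset.sum_Ico_eq_sum_range, show t + 1 - (τ + 1) = t - τ by omega]
      exact Finset.sum_congr rfl fun j _ => by rw [show τ + 1 + j - τ = j + 1 by omega]
    _ ≤ r / (1 - r) := sum_range_pow_succ_le hr0 hr1 _
  rw [← Finset.sum_range_add_sum_Ico _ (by omega : τ ≤ t + 1),
    Finset.sum_eq_sum_Ico_succ_bot (by omega : τ < t + 1), hτ, zero_add]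
  linarith [show 2 * r / (1 - r) = r / (1 - r) + r / (1 - r) by ring]

section ChangePoint

variable {Ω : Type*} [MeasurableSpace Ω] {P : Measure Ω} [IsProbabilityMeasure P]
  {X : ℕ → Ω → ℝ} {T τ t k : ℕ} {μ : ℝ}

lemma measureReal_cusumV_lt_cusumV_of_lt (hkτ : k < τ) (hτT : τ ≤ T) (hμ : 0 < μ)
    (hX : ∀ i, Measurable (X i)) (hind : iIndepFun (fun i : Set.Icc 1 T => X i) P)
    (hpre : ∀ i, 1 ≤ i → i ≤ τ → P.map (X i) = gaussianReal 0 1) :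
    P.real {ω | cusumV μ (fun i => X i ω) t τ < cusumV μ (fun i => X i ω) t k}
      ≤ exp (-(μ ^ 2 / 8) * ((τ : ℝ) - k)) := by
  have hmem : ∀ i ∈ Finset.Ioc k τ, i ∈ Set.Icc 1 T := fun i hi => by
    have := Finset.mem_Ioc.mp hi; exact ⟨by omega, by omega⟩
  have hsubG : ∀ i ∈ Finset.Ioc k τ, HasSubgaussianMGF (X i) 1 P := fun i hi => by
    have := Finset.mem_Ioc.mp hi
    simpa using hasSubgaussianMGF_sub_of_map_eq_gaussianReal (hX i) (hpre i (by omega) this.2)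
  have hsub : {ω | cusumV μ (fun i => X i ω) t τ < cusumV μ (fun i => X i ω) t k}
      ⊆ {ω | μ / 2 * ((τ : ℝ) - k) ≤ ∑ i ∈ Finset.Ioc k τ, X i ω} := fun ω hω => by
    simp only [Set.mem_ofPred_eq, cusumV_lt_cusumV_iff hμ, pS_sub_pS_s9 _ hkτ.le] at hω ⊢
    exact hω.le
  refine (measureReal_mono hsub).trans ?_
  have hN : (0 : ℝ) ≤ (τ : ℝ) - k := sub_nonneg.mpr (by exact_mod_cast hkτ.le)
  refine (measureReal_sum_ge_le_of_iIndepFun_subtype hind hmem hsubG (by positivity)).trans_eq ?_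
  rw [Nat.card_Ioc, Nat.cast_sub hkτ.le, NNReal.coe_one]
  congr 1
  field_simp
  ring

lemma measureReal_cusumV_lt_cusumV_of_gt (hτk : τ < k) (hkT : k ≤ T) (hμ : 0 < μ) {v : ℝ≥0}
    (hX : ∀ i, Measurable (X i)) (hind : iIndepFun (fun i : Set.Icc 1 T => X i) P)
    (hpost : ∀ i, τ < i → i ≤ T → P.map (X i) = gaussianReal μ v) :
    P.real {ω | cusumV μ (fun i => X i ω) t τ < cusumV μ (fun i => X i ω) t k}
      ≤ exp (-(μ ^ 2 / (8 * v)) * ((k : ℝ) - τ)) := by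
  have hmem : ∀ i ∈ Finset.Ioc τ k, i ∈ Set.Icc 1 T := fun i hi => by
    have := Finset.mem_Ioc.mp hi; exact ⟨by omega, by omega⟩
  have hind' : iIndepFun (fun i : Set.Icc 1 T => fun ω => μ - X i ω) P :=
    hind.comp (fun _ x => μ - x) fun _ => measurable_const.sub measurable_id
  have hsubG : ∀ i ∈ Finset.Ioc τ k, HasSubgaussianMGF (fun ω => μ - X i ω) v P := fun i hi => by
    have := Finset.mem_Ioc.mp hi
    exact (hasSubgaussianMGF_sub_of_map_eq_gaussianReal (hX i) (hpost i this.1 (by omega))).neg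
      |>.congr (ae_of_all _ fun ω => neg_sub _ _)
  have hsub : {ω | cusumV μ (fun i => X i ω) t τ < cusumV μ (fun i => X i ω) t k}
      ⊆ {ω | μ / 2 * ((k : ℝ) - τ) ≤ ∑ i ∈ Finset.Ioc τ k, (μ - X i ω)} := fun ω hω => by
    simp only [Set.mem_ofPred_eq, cusumV_lt_cusumV_iff hμ] at hω ⊢
    rw [Finset.sum_sub_distrib, Finset.sum_const, Nat.card_Ioc, nsmul_eq_mul,
      Nat.cast_sub hτk.le, ← pS_sub_pS_s9 _ hτk.le]
    linarith
  refine (measureReal_mono hsub).trans ?_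
  have hN : (0 : ℝ) ≤ (k : ℝ) - τ := sub_nonneg.mpr (by exact_mod_cast hτk.le)
  refine (measureReal_sum_ge_le_of_iIndepFun_subtype hind' hmem hsubG (by positivity)).trans_eq ?_
  rw [Nat.card_Ioc, Nat.cast_sub hτk.le]
  congr 1
  field_simp
  ring

lemma measureReal_Ylr_ne_cusumV_le (hτt : τ ≤ t) (htT : t ≤ T) (hμ : 0 < μ) {v : ℝ≥0} {c : ℝ}
    (hc : 0 < c) (hc₁ : c ≤ 1 / 8) (hcv : c ≤ 1 / (8 * v))
    (hX : ∀ i, Measurable (X i)) (hind : iIndepFun (fun i : Set.Icc 1 T => X i) P)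
    (hpre : ∀ i, 1 ≤ i → i ≤ τ → P.map (X i) = gaussianReal 0 1)
    (hpost : ∀ i, τ < i → i ≤ T → P.map (X i) = gaussianReal μ v) :
    P.real {ω | Ylr μ (fun i => X i ω) t ≠ cusumV μ (fun i => X i ω) t τ}
      ≤ 2 * exp (-(c * μ ^ 2)) / (1 - exp (-(c * μ ^ 2))) := by
  set r := exp (-(c * μ ^ 2))
  set A : ℕ → Set Ω :=
    fun k => {ω | cusumV μ (fun i => X i ω) t τ < cusumV μ (fun i => X i ω) t k}
  have hr1 : r < 1 := exp_lt_one_iff.mpr (neg_neg_of_pos (by positivity))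
  have hpow : ∀ {b : ℝ} (n : ℕ), c * μ ^ 2 ≤ b → exp (-b * n) ≤ r ^ n := fun n hb => by
    rw [← exp_nat_mul, exp_le_exp]
    nlinarith [Nat.cast_nonneg (α := ℝ) n]
  have hunion : {ω | Ylr μ (fun i => X i ω) t ≠ cusumV μ (fun i => X i ω) t τ}
      ⊆ ⋃ k ∈ Finset.range (t + 1), A k := fun ω hω => by
    simpa [A] using exists_cusumV_lt_of_Ylr_ne hτt hω
  refine (measureReal_mono hunion (measure_ne_top _ _)).trans <|
    (measureReal_biUnion_finset_le _ _).trans <|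
    sum_range_succ_le_of_two_sided_geometric (exp_pos _).le hr1 hτt (by simp [A])
      (fun k hk => ?_) (fun k hk _ => ?_)
  · refine (measureReal_cusumV_lt_cusumV_of_lt hk (by omega) hμ hX hind hpre).trans ?_
    rw [← Nat.cast_sub hk.le]
    exact hpow _ (by nlinarith [sq_nonneg μ])
  · refine (measureReal_cusumV_lt_cusumV_of_gt hk (by omega) hμ hX hind hpost).trans ?_
    rw [← Nat.cast_sub hk.le]
    refine hpow _ ?_
    have := mul_le_mul_of_nonneg_right hcv (sq_nonneg μ)
    rwa [one_div_mul_eq_div] at this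

end ChangePoint

theorem statement9_general (σ : ℝ) (hσ : 0 < σ) (μs : ℕ → ℝ) (Ts : ℕ → ℕ)
    (hμ : Tendsto μs atTop atTop) :
    ∀ ε : ℝ, 0 < ε → ∃ M : ℕ, ∀ m : ℕ, M ≤ m →
      ∀ τ t : ℕ, 1 ≤ τ → τ ≤ t → t ≤ Ts m →
      ∀ (Ω : Type) [MeasurableSpace Ω] (P : Measure Ω) [IsProbabilityMeasure P]
        (X : ℕ → Ω → ℝ), (∀ i, Measurable (X i)) →
      iIndepFun (fun i : ↥(Set.Icc 1 (Ts m)) => X (i : ℕ)) P →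
      (∀ i, 1 ≤ i → i ≤ τ → Measure.map (X i) P = gaussianReal 0 1) →
      (∀ i, τ < i → i ≤ Ts m → Measure.map (X i) P = gaussianReal (μs m) ((σ ^ 2).toNNReal)) →
      (P {ω | Ylr (μs m) (fun i => X i ω) t ≠ cusumV (μs m) (fun i => X i ω) t τ}).toReal ≤ ε := by
  intro ε hε
  set c : ℝ := min (1 / 8) (1 / (8 * σ ^ 2))
  have hc : 0 < c := lt_min (by norm_num) (by positivity)
  have hr : Tendsto (fun m => exp (-(c * μs m ^ 2))) atTop (𝓝 0) :=
    tendsto_exp_neg_atTop_nhds_zero.comp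
      ((tendsto_pow_atTop two_ne_zero).comp hμ |>.const_mul_atTop hc)
  have hbound : Tendsto (fun m => 2 * exp (-(c * μs m ^ 2)) / (1 - exp (-(c * μs m ^ 2))))
      atTop (𝓝 0) := by
    simpa [Pi.div_def] using (hr.const_mul 2).div (tendsto_const_nhds.sub hr) (by norm_num)
  obtain ⟨M, hM⟩ := eventually_atTop.mp
    ((hμ.eventually_gt_atTop 0).and (hbound.eventually (ge_mem_nhds hε)))
  refine ⟨M, fun m hm τ t _ hτt htT Ω _ P _ X hX hind hpre hpost => ?_⟩
  have hv : ((σ ^ 2).toNNReal : ℝ) = σ ^ 2 := Real.coe_toNNReal _ (sq_nonneg σ)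
  exact (measureReal_Ylr_ne_cusumV_le hτt htT (hM m hm).1 hc (min_le_left _ _)
    (by rw [hv]; exact min_le_right _ _) hX hind hpre hpost).trans (hM m hm).2

/-- with μ_m → ∞, 𝒯_m → ∞, √(log 𝒯_m)/μ_m → 0, P(Y_t^LR ≠ V_{t,τ}) tends to 0 uniformly in 1 ≤ τ ≤ t ≤ 𝒯_m: the CUSUM maximum is attained at the change point. -/
theorem statement9 (σ : ℝ) (hσ : 0 < σ) (μs : ℕ → ℝ) (Ts : ℕ → ℕ)
    (hμ : Tendsto μs atTop atTop) (hT : Tendsto Ts atTop atTop)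
    (hrate : Tendsto (fun m => Real.sqrt (Real.log (Ts m : ℝ)) / μs m) atTop (nhds 0)) :
    ∀ ε : ℝ, 0 < ε → ∃ M : ℕ, ∀ m : ℕ, M ≤ m →
      ∀ τ t : ℕ, 1 ≤ τ → τ ≤ t → t ≤ Ts m →
      ∀ (Ω : Type) [MeasurableSpace Ω] (P : Measure Ω) [IsProbabilityMeasure P]
        (X : ℕ → Ω → ℝ), (∀ i, Measurable (X i)) →
      iIndepFun (fun i : ↥(Set.Icc 1 (Ts m)) => X (i : ℕ)) P →
      (∀ i, 1 ≤ i → i ≤ τ → Measure.map (X i) P = gaussianReal 0 1) →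
      (∀ i, τ < i → i ≤ Ts m → Measure.map (X i) P = gaussianReal (μs m) ((σ ^ 2).toNNReal)) →
      (P {ω | Ylr (μs m) (fun i => X i ω) t ≠ cusumV (μs m) (fun i => X i ω) t τ}).toReal ≤ ε :=
  statement9_general σ hσ μs Ts hμ

end
end

section
/- Fix σ > 0. For every ε > 0 there exists μ₀ > 0 such that for all μ ≥ μ₀ and all integers τ ≤ v < t: if X_{τ+1}, X_{τ+2}, …, X_t are i.i.d. N(μ, σ²), then P(W_{t,τ} ≤ W_{t,v}) ≤ (1+ε)·exp(−μ²(v−τ)/(10σ²)). -/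
/-!
Write `A = S_t - S_τ`, `B = S_t - S_v`, `n = t - τ`, `m = t - v` and `r = √(n / m)`. The
event `W_{t,τ} ≤ W_{t,v}` says `|A| ≤ r |B|`, so it forces `A - r B ≤ 0` or `A + r B ≤ 0`.
Each is an event `∑ cᵢ Xᵢ ≤ 0` with weights `cᵢ = 1` on `(τ, v]` and `cᵢ = 1 ± r` on
`(v, t]`. Since `r² m = n`, the weights satisfy `∑ cᵢ² = 2 ∑ cᵢ = 2k` with
`k = n ± √(n m) ≥ (v - τ) / 2` (AM-GM), so the sub-Gaussian tail bound for `∑ cᵢ (Xᵢ - μ)`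
gives `exp (-μ² k / (4σ²)) ≤ exp (-μ² (v - τ) / (8σ²))` for each event. For `μ ≥ 7σ`, twice
this is below `exp (-μ² (v - τ) / (10σ²))`.
-/

open MeasureTheory ProbabilityTheory Filter Real

noncomputable section

/-- GLR quantity `W_{t,k} = |S_t − S_k|/√(t−k)`. -/
def glrW (X : ℕ → ℝ) (t k : ℕ) : ℝ := |pS X t - pS X k| / Real.sqrt ((t : ℝ) - (k : ℝ))

open scoped NNReal

lemma hasSubgaussianMGF_of_hasLaw_gaussianReal {Ω : Type*} [MeasurableSpace Ω] {P : Measure Ω}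
    {Y : Ω → ℝ} {v : ℝ≥0} (hY : HasLaw Y (gaussianReal 0 v) P) : HasSubgaussianMGF Y v P := by
  rw [← HasSubgaussianMGF.id_map_iff hY.aemeasurable, hY.map_eq]
  exact ⟨fun t ↦ integrable_exp_mul_gaussianReal t, fun t ↦ by simp [mgf_id_gaussianReal]⟩

lemma measureReal_sum_mul_nonpos_le {ι Ω : Type*} [MeasurableSpace Ω] {P : Measure Ω}
    {X : ι → Ω → ℝ} (hindep : iIndepFun X P) {s : Finset ι} {m : ℝ} {v : ℝ≥0}
    (hlaw : ∀ i ∈ s, HasLaw (X i) (gaussianReal m v) P) (c : ι → ℝ)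
    (hmean : 0 ≤ m * ∑ i ∈ s, c i) :
    P.real {ω | ∑ i ∈ s, c i * X i ω ≤ 0}
      ≤ exp (-(m * ∑ i ∈ s, c i) ^ 2 / (2 * (v * ∑ i ∈ s, c i ^ 2))) := by
  have hsubG : ∀ i ∈ s, HasSubgaussianMGF (fun ω ↦ -c i * (X i ω - m))
      (.mk (c i ^ 2) (sq_nonneg _) * v) P := fun i hi ↦
    hasSubgaussianMGF_of_hasLaw_gaussianReal <| by
      convert gaussianReal_const_mul (gaussianReal_sub_const (hlaw i hi) m) (-c i) using 3 <;> simp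
  have hindep' : iIndepFun (fun i ω ↦ -c i * (X i ω - m)) P :=
    hindep.comp (fun i x ↦ -c i * (x - m)) fun i ↦ by fun_prop
  have key := HasSubgaussianMGF.measure_sum_ge_le_of_iIndepFun hindep' hsubG hmean
  have hset : {ω | ∑ i ∈ s, c i * X i ω ≤ 0}
      = {ω | m * ∑ i ∈ s, c i ≤ ∑ i ∈ s, -c i * (X i ω - m)} := by
    ext ω
    simp only [Set.mem_ofPred_eq, neg_mul, mul_sub, Finset.sum_neg_distrib, Finset.sum_sub_distrib,
      ← Finset.sum_mul]
    constructor <;> intro h <;> linarith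
  rw [hset]
  convert key using 4
  push_cast
  rw [← Finset.sum_mul, mul_comm]

lemma pS_sub_pS_eq_sum_Ioc (x : ℕ → ℝ) {k t : ℕ} (hkt : k ≤ t) :
    pS x t - pS x k = ∑ i ∈ Finset.Ioc k t, x i := by
  have hIoc : ∀ j, pS x j = ∑ i ∈ Finset.Ioc 0 j, x i := fun j ↦ by
    rw [pS, ← Finset.Icc_add_one_left_eq_Ioc, zero_add]
  rw [hIoc, hIoc, ← Finset.sum_Ioc_consecutive _ k.zero_le hkt, add_sub_cancel_left]

lemma sum_Ioc_ite_lt (f g : ℕ → ℝ) {τ v t : ℕ} (hτv : τ ≤ v) (hvt : v ≤ t) :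
    ∑ i ∈ Finset.Ioc τ t, (if v < i then g i else f i)
      = ∑ i ∈ Finset.Ioc τ v, f i + ∑ i ∈ Finset.Ioc v t, g i := by
  rw [← Finset.sum_Ioc_consecutive _ hτv hvt]
  congr 1 <;> refine Finset.sum_congr rfl fun i hi ↦ ?_ <;> simp at hi
  · rw [if_neg (by omega)]
  · rw [if_pos hi.1]

lemma sum_Ioc_ite_mul (x : ℕ → ℝ) (e : ℝ) {τ v t : ℕ} (hτv : τ ≤ v) (hvt : v ≤ t) :
    ∑ i ∈ Finset.Ioc τ t, (if v < i then 1 + e else 1) * x i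
      = ∑ i ∈ Finset.Ioc τ t, x i + e * ∑ i ∈ Finset.Ioc v t, x i := by
  simp only [ite_mul]
  rw [sum_Ioc_ite_lt _ _ hτv hvt, ← Finset.sum_Ioc_consecutive _ hτv hvt]
  simp only [one_mul, add_mul, Finset.sum_add_distrib, ← Finset.mul_sum]
  ring

lemma sub_or_add_nonpos_of_abs_div_sqrt_le {A B n m : ℝ} (hn : 0 < n) (hm : 0 < m)
    (h : |A| / √n ≤ |B| / √m) : A - √(n / m) * B ≤ 0 ∨ A + √(n / m) * B ≤ 0 := by
  have hAB : |A| ≤ √(n / m) * |B| := by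
    rw [div_le_div_iff₀ (sqrt_pos.2 hn) (sqrt_pos.2 hm)] at h
    rw [sqrt_div' _ hm.le, div_mul_eq_mul_div, le_div_iff₀ (sqrt_pos.2 hm)]
    linarith
  rcases abs_cases B with ⟨hB, -⟩ | ⟨hB, -⟩ <;> rw [hB] at hAB
  · exact Or.inl (by linarith [le_abs_self A])
  · exact Or.inr (by linarith [le_abs_self A])

lemma neg_sq_div_le_of_sq_mul_eq {μ V d m e : ℝ} (hV : 0 < V) (hd : 0 ≤ d) (hm : 0 < m)
    (he : e ^ 2 * m = d + m) :
    -(μ * (d + (1 + e) * m)) ^ 2 / (2 * (V * (d + (1 + e) ^ 2 * m)))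
      ≤ -(μ ^ 2 * d) / (8 * V) := by
  set k := d + (1 + e) * m
  have hq : d + (1 + e) ^ 2 * m = 2 * k := by linear_combination he
  -- AM-GM: `(e m)² = m (d + m) ≤ (m + d / 2)²`, so `e m ≥ -(m + d / 2)`.
  have hkd : d ≤ 2 * k := by nlinarith [sq_nonneg (e * m + m + d / 2)]
  rw [hq]
  rcases (hd.trans hkd).eq_or_lt with hk0 | hk0
  · -- `k = 0` forces `d = 0`, and then both sides vanish since `x / 0 = 0`.
    have hd0 : d = 0 := by linarith
    simp [← hk0, hd0]
  · rw [div_le_div_iff₀ (by positivity) (by positivity)]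
    nlinarith [mul_nonneg (mul_nonneg (sq_nonneg μ) (mul_pos hV hk0).le) (sub_nonneg.2 hkd)]

lemma measureReal_sum_Ioc_ite_mul_nonpos_le {Ω : Type*} [MeasurableSpace Ω] {P : Measure Ω}
    {X : ℕ → Ω → ℝ} {τ v t : ℕ} (hτv : τ ≤ v) (hvt : v < t)
    (hindep : iIndepFun (fun i : ↥(Set.Ioc τ t) ↦ X i) P) {μ : ℝ} (hμ : 0 ≤ μ) {V : ℝ≥0}
    (hV : 0 < V) (hlaw : ∀ i, τ < i → i ≤ t → HasLaw (X i) (gaussianReal μ V) P) {e : ℝ}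
    (he : e ^ 2 * ((t : ℝ) - v) = t - τ) :
    P.real {ω | ∑ i ∈ Finset.Ioc τ t, (if v < i then 1 + e else 1) * X i ω ≤ 0}
      ≤ exp (-(μ ^ 2 * ((v : ℝ) - τ)) / (8 * V)) := by
  have hd : (0 : ℝ) ≤ v - τ := sub_nonneg.2 (Nat.cast_le.2 hτv)
  have hm : (0 : ℝ) < t - v := sub_pos.2 (Nat.cast_lt.2 hvt)
  have hsum : ∑ i ∈ Finset.Ioc τ t, (if v < i then 1 + e else 1)
      = (v - τ : ℝ) + (1 + e) * (t - v) := by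
    rw [sum_Ioc_ite_lt (fun _ ↦ 1) (fun _ ↦ 1 + e) hτv hvt.le]
    simp only [Finset.sum_const, Nat.card_Ioc, nsmul_eq_mul, Nat.cast_sub hτv, Nat.cast_sub hvt.le]
    ring
  have hsq : ∑ i ∈ Finset.Ioc τ t, (if v < i then 1 + e else 1) ^ 2
      = (v - τ : ℝ) + (1 + e) ^ 2 * (t - v) := by
    simp only [apply_ite (· ^ 2), one_pow]
    rw [sum_Ioc_ite_lt (fun _ ↦ 1) (fun _ ↦ (1 + e) ^ 2) hτv hvt.le]
    simp only [Finset.sum_const, Nat.card_Ioc, nsmul_eq_mul, Nat.cast_sub hτv, Nat.cast_sub hvt.le]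
    ring
  have hk : 0 ≤ (v - τ : ℝ) + (1 + e) * (t - v) := by nlinarith
  have hcoe : ∀ f : ℕ → ℝ, ∑ i : ↥(Set.Ioc τ t), f i = ∑ i ∈ Finset.Ioc τ t, f i :=
    fun f ↦ (Finset.sum_subtype _ (fun _ ↦ by simp) f).symm
  simp only [← hcoe] at hsum hsq ⊢
  refine (measureReal_sum_mul_nonpos_le hindep (s := Finset.univ) (fun i _ ↦ hlaw i i.2.1 i.2.2)
    (fun i ↦ if v < (i : ℕ) then 1 + e else 1) (by rw [hsum]; exact mul_nonneg hμ hk)).trans ?_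
  rw [hsum, hsq]
  exact exp_le_exp.2 (neg_sq_div_le_of_sq_mul_eq (NNReal.coe_pos.2 hV) hd hm (by linarith))

lemma two_mul_exp_le_exp {a b : ℝ} (hb : 0 < b) (h : 40 * b ≤ a) :
    2 * exp (-a / (8 * b)) ≤ exp (-a / (10 * b)) := by
  have hlog : log 2 ≤ a / (40 * b) := by
    rw [le_div_iff₀ (by positivity)]
    nlinarith [log_two_lt_d9]
  calc 2 * exp (-a / (8 * b)) = exp (log 2 + -a / (8 * b)) := by rw [exp_add, exp_log two_pos]
    _ ≤ exp (-a / (10 * b)) := by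
      refine exp_le_exp.2 ?_
      have : -a / (10 * b) = a / (40 * b) + -a / (8 * b) := by field_simp; ring
      linarith

/-- For σ > 0 and every ε > 0 there is μ₀ > 0 such that for all μ ≥ μ₀ and
all integers τ ≤ v < t: if X_{τ+1},…,X_t are i.i.d. N(μ,σ²), then
P(W_{t,τ} ≤ W_{t,v}) ≤ (1+ε)·exp(−μ²(v−τ)/(10σ²)). -/
theorem statement10 (σ : ℝ) (hσ : 0 < σ) :
    ∀ ε : ℝ, 0 < ε → ∃ μ₀ : ℝ, 0 < μ₀ ∧ ∀ μ : ℝ, μ₀ ≤ μ →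
      ∀ τ v t : ℕ, τ ≤ v → v < t →
      ∀ (Ω : Type) [MeasurableSpace Ω] (P : Measure Ω) [IsProbabilityMeasure P]
        (X : ℕ → Ω → ℝ), (∀ i, Measurable (X i)) →
      iIndepFun (fun i : ↥(Set.Ioc τ t) => X (i : ℕ)) P →
      (∀ i, τ < i → i ≤ t → Measure.map (X i) P = gaussianReal μ ((σ ^ 2).toNNReal)) →
      (P {ω | glrW (fun i => X i ω) t τ ≤ glrW (fun i => X i ω) t v}).toReal ≤
        (1 + ε) * Real.exp (-(μ ^ 2 * ((v : ℝ) - (τ : ℝ))) / (10 * σ ^ 2)) := by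
  intro ε hε
  refine ⟨7 * σ, by positivity, fun μ hμ τ v t hτv hvt Ω _ P _ X hX hindep hmap ↦ ?_⟩
  rw [← measureReal_def]
  rcases hτv.eq_or_lt with rfl | hτv'
  · exact measureReal_le_one.trans (by simp [hε.le])
  have hμ' : 0 ≤ μ := by linarith
  have hσ2 : ((σ ^ 2).toNNReal : ℝ) = σ ^ 2 := Real.coe_toNNReal _ (sq_nonneg σ)
  have hn : (0 : ℝ) < t - τ := sub_pos.2 (Nat.cast_lt.2 (hτv'.trans hvt))
  have hm : (0 : ℝ) < t - v := sub_pos.2 (Nat.cast_lt.2 hvt)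
  set r := √(((t : ℝ) - τ) / (t - v))
  have hr : r ^ 2 * ((t : ℝ) - v) = t - τ := by
    rw [sq_sqrt (by positivity), div_mul_cancel₀ _ hm.ne']
  have hevent : {ω | glrW (fun i ↦ X i ω) t τ ≤ glrW (fun i ↦ X i ω) t v}
      ⊆ {ω | ∑ i ∈ Finset.Ioc τ t, (if v < i then 1 + -r else 1) * X i ω ≤ 0}
        ∪ {ω | ∑ i ∈ Finset.Ioc τ t, (if v < i then 1 + r else 1) * X i ω ≤ 0} := by
    intro ω hω
    simp only [Set.mem_ofPred_eq, glrW, pS_sub_pS_eq_sum_Ioc _ hvt.le,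
      pS_sub_pS_eq_sum_Ioc _ (hτv.trans hvt.le)] at hω
    simp only [Set.mem_union, Set.mem_ofPred_eq, sum_Ioc_ite_mul _ _ hτv hvt.le]
    rw [neg_mul, ← sub_eq_add_neg]
    exact sub_or_add_nonpos_of_abs_div_sqrt_le hn hm hω
  have hlaw i (h₁ : τ < i) (h₂ : i ≤ t) : HasLaw (X i) (gaussianReal μ (σ ^ 2).toNNReal) P :=
    ⟨(hX i).aemeasurable, hmap i h₁ h₂⟩
  have hV : 0 < (σ ^ 2).toNNReal := Real.toNNReal_pos.2 (by positivity)
  have hbound e (he : e ^ 2 * ((t : ℝ) - v) = t - τ) := hσ2 ▸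
    measureReal_sum_Ioc_ite_mul_nonpos_le hτv hvt hindep hμ' hV hlaw he
  calc _ ≤ _ := (measureReal_mono hevent).trans (measureReal_union_le _ _)
    _ ≤ 2 * exp (-(μ ^ 2 * ((v : ℝ) - τ)) / (8 * σ ^ 2)) := by
      linarith [hbound (-r) (by rwa [neg_sq]), hbound r hr]
    _ ≤ exp (-(μ ^ 2 * ((v : ℝ) - τ)) / (10 * σ ^ 2)) := by
      refine two_mul_exp_le_exp (by positivity) ?_
      have hd : (1 : ℝ) ≤ v - τ := by
        rw [le_sub_iff_add_le']; exact_mod_cast hτv'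
      nlinarith
    _ ≤ _ := le_mul_of_one_le_left (exp_pos _).le (by linarith)

end
end

section
/- Fix σ > 0. For every sequence of parameter pairs (μ_m, 𝒯_m) with μ_m → ∞, 𝒯_m → ∞ and √(log 𝒯_m)/μ_m → 0: in the change-point model with change after time τ (X_1,…,X_τ i.i.d. N(0,1), X_{τ+1},…,X_{𝒯_m} i.i.d. N(μ_m, σ²), all independent), the supremum over integers 1 ≤ τ < t ≤ 𝒯_m of P(Y_t^GLR ≠ W_{t,τ}) tends to 0 as m → ∞; i.e., with probability tending to 1 uniformly in τ and t, the GLR maximum is attained at the change point k = τ. -/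
/-!
Fix a scale `B > 0` with `μ ≥ 3(σ + 1)B`. On the event that every post-change observation lies
within `σB` of `μ` and every pre-change block sum satisfies `|S_τ - S_k| ≤ √(τ - k) B`, an
elementary comparison gives `W_{t,k} ≤ W_{t,τ}` for every `k < t`: after the change the drift of
`S_t - S_k` dominates its `√(t - k)` normalisation, before the change the extra noise `S_τ - S_k`
is too small to compensate for the longer window. Each of these at most `t` events fails with
probability at most `2 exp(-B²/2)` by the sub-Gaussian tail bound, so
`P(Y_t ≠ W_{t,τ}) ≤ 2𝒯 exp(-μ²/(18(σ + 1)²))` for `B = μ/(3(σ + 1))`, and this tends to `0`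
because `log 𝒯 = o(μ²)`.
-/

open MeasureTheory ProbabilityTheory Filter Real

noncomputable section

/-- GLR statistic `Y_t^GLR = max_{0 ≤ k < t} W_{t,k}`. -/
def Yglr (X : ℕ → ℝ) (t : ℕ) : ℝ := ⨆ k : Fin t, glrW X t (k : ℕ)

lemma pS_sub_pS_eq_sum (x : ℕ → ℝ) {a b : ℕ} (hab : a ≤ b) :
    pS x b - pS x a = ∑ i ∈ Finset.Ioc a b, x i := by
  have h : ∀ n, pS x n = ∑ i ∈ Finset.Ioc 0 n, x i := fun n => by
    rw [pS, ← Finset.Icc_add_one_left_eq_Ioc, zero_add]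
  rw [h, h, sub_eq_iff_eq_add', Finset.sum_Ioc_consecutive x (Nat.zero_le a) hab]

lemma pS_sub_pS_mem_Icc {x : ℕ → ℝ} {μ η : ℝ} {a b : ℕ} (hab : a ≤ b)
    (hx : ∀ i ∈ Finset.Ioc a b, |x i - μ| ≤ η) :
    pS x b - pS x a ∈ Set.Icc (((b : ℝ) - a) * (μ - η)) (((b : ℝ) - a) * (μ + η)) := by
  have hsum (c : ℝ) : ∑ _i ∈ Finset.Ioc a b, c = ((b : ℝ) - a) * c := by
    rw [Finset.sum_const, Nat.card_Ioc, nsmul_eq_mul, Nat.cast_sub hab]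
  rw [pS_sub_pS_eq_sum x hab, ← hsum, ← hsum]
  exact ⟨Finset.sum_le_sum fun i hi => by linarith [(abs_le.mp (hx i hi)).1],
    Finset.sum_le_sum fun i hi => by linarith [(abs_le.mp (hx i hi)).2]⟩

lemma mul_le_add_mul_of_increment_bounds {p q u w μ η : ℝ} (hp : 0 ≤ p) (hpq : p ≤ q)
    (hu : u ≤ p ^ 2 * (μ + η)) (hw : (q ^ 2 - p ^ 2) * (μ - η) ≤ w)
    (hημ : η ≤ μ) (hη : 3 * η ≤ μ) :
    u * q ≤ (u + w) * p := by
  have h1 : u * (q - p) ≤ p ^ 2 * (μ + η) * (q - p) :=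
    mul_le_mul_of_nonneg_right hu (sub_nonneg.2 hpq)
  have h2 : p * (μ + η) * (q - p) ≤ (q ^ 2 - p ^ 2) * (μ - η) := by
    nlinarith [mul_nonneg (mul_nonneg (sub_nonneg.2 hpq) (sub_nonneg.2 hpq)) (sub_nonneg.2 hημ),
      mul_nonneg (mul_nonneg (sub_nonneg.2 hpq) hp) (sub_nonneg.2 hη)]
  nlinarith [mul_le_mul_of_nonneg_left h2 hp, mul_le_mul_of_nonneg_left hw hp]

lemma abs_add_mul_le_mul_of_increment_bounds {q r s V M B μ η : ℝ} (hq : 1 ≤ q) (hr : 1 ≤ r)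
    (hs : 0 ≤ s) (hs2 : s ^ 2 = q ^ 2 + r ^ 2) (hV : q ^ 2 * (μ - η) ≤ V) (hM : |M| ≤ r * B)
    (hB : 0 ≤ B) (hμ : 3 * B + η ≤ μ) :
    |V + M| * q ≤ V * s := by
  have hsr : s ≤ q + r := by nlinarith
  have hV' : 3 * B * q ^ 2 ≤ V := by nlinarith
  have hBqr : 0 ≤ B * q * r := by positivity
  -- `V (s - q) (s + q) = V r²` and `s + q ≤ 2q + r ≤ 3qr`
  have key : r * B * q * (s + q) ≤ V * (s - q) * (s + q) := by
    have : V * (s - q) * (s + q) = V * r ^ 2 := by linear_combination V * hs2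
    rw [this]
    nlinarith [mul_nonneg hBqr (mul_nonneg (by linarith : (0:ℝ) ≤ q) (sub_nonneg.2 hr)),
      mul_nonneg hBqr (mul_nonneg (by linarith : (0:ℝ) ≤ r) (sub_nonneg.2 hq)),
      mul_nonneg hBqr (sub_nonneg.2 hsr), mul_le_mul_of_nonneg_right hV' (sq_nonneg r)]
  have hrBq : r * B * q ≤ V * (s - q) := le_of_mul_le_mul_right key (by linarith)
  have hVM : |V + M| ≤ V + r * B := by
    have : 0 ≤ V := le_trans (by positivity) hV'
    linarith [abs_add_le V M, abs_of_nonneg this]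
  nlinarith [mul_le_mul_of_nonneg_right hVM (by linarith : (0:ℝ) ≤ q)]

lemma one_le_cast_sub_cast {a b : ℕ} (h : a < b) : 1 ≤ (b : ℝ) - a := by
  have : (a : ℝ) + 1 ≤ b := by exact_mod_cast h
  linarith

section ChangePoint

variable {x : ℕ → ℝ} {τ t : ℕ} {μ η B : ℝ}

lemma glrW_le_glrW_of_post_change (hτt : τ < t) (hpost : ∀ i ∈ Finset.Ioc τ t, |x i - μ| ≤ η)
    (hη : 3 * η ≤ μ) (hημ : η < μ) {k : ℕ} (hτk : τ < k) (hkt : k < t) :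
    glrW x t k ≤ glrW x t τ := by
  have hu := pS_sub_pS_mem_Icc hkt.le fun i hi =>
    hpost i (Finset.Ioc_subset_Ioc_left hτk.le hi)
  have hw := pS_sub_pS_mem_Icc hτk.le fun i hi =>
    hpost i (Finset.Ioc_subset_Ioc_right hkt.le hi)
  have htk := one_le_cast_sub_cast hkt
  have htτ := one_le_cast_sub_cast hτt
  have hu0 : 0 < pS x t - pS x k := lt_of_lt_of_le (by nlinarith) hu.1
  have hkτ := one_le_cast_sub_cast hτk
  have hV0 : 0 < pS x t - pS x τ := by nlinarith [hw.1]
  rw [glrW, glrW, abs_of_pos hu0, abs_of_pos hV0,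
    div_le_div_iff₀ (Real.sqrt_pos.2 (by linarith)) (Real.sqrt_pos.2 (by linarith)),
    show pS x t - pS x τ = (pS x t - pS x k) + (pS x k - pS x τ) by ring]
  refine mul_le_add_mul_of_increment_bounds (Real.sqrt_nonneg _)
    (Real.sqrt_le_sqrt (by linarith)) ?_ ?_ hημ.le hη
  · rw [Real.sq_sqrt (by linarith)]; exact hu.2
  · rw [Real.sq_sqrt (by linarith), Real.sq_sqrt (by linarith),
      show (t : ℝ) - τ - (t - k) = k - τ by ring]
    exact hw.1

lemma glrW_le_glrW_of_pre_change (hτt : τ < t) (hpost : ∀ i ∈ Finset.Ioc τ t, |x i - μ| ≤ η)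
    (hpre : ∀ k < τ, |pS x τ - pS x k| ≤ √((τ : ℝ) - k) * B) (hB : 0 < B)
    (hμ : 3 * B + η ≤ μ) {k : ℕ} (hkτ : k < τ) :
    glrW x t k ≤ glrW x t τ := by
  have hV := pS_sub_pS_mem_Icc hτt.le hpost
  have htτ := one_le_cast_sub_cast hτt
  have hτk := one_le_cast_sub_cast hkτ
  have hV0 : 0 < pS x t - pS x τ := lt_of_lt_of_le (by nlinarith) hV.1
  rw [glrW, glrW, abs_of_pos hV0,
    div_le_div_iff₀ (Real.sqrt_pos.2 (by linarith)) (Real.sqrt_pos.2 (by linarith)),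
    show pS x t - pS x k = (pS x t - pS x τ) + (pS x τ - pS x k) by ring]
  refine abs_add_mul_le_mul_of_increment_bounds (Real.one_le_sqrt.2 htτ)
    (Real.one_le_sqrt.2 hτk) (Real.sqrt_nonneg _) ?_ ?_ (hpre k hkτ) hB.le hμ
  · rw [Real.sq_sqrt (by linarith), Real.sq_sqrt (by linarith), Real.sq_sqrt (by linarith)]
    ring
  · rw [Real.sq_sqrt (by linarith)]; exact hV.1

lemma Yglr_eq_glrW_of_forall_le (hτt : τ < t) (h : ∀ k < t, glrW x t k ≤ glrW x t τ) :
    Yglr x t = glrW x t τ :=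
  have : Nonempty (Fin t) := ⟨⟨τ, hτt⟩⟩
  le_antisymm (ciSup_le fun k => h k k.2)
    (le_ciSup (f := fun k : Fin t => glrW x t k) (Set.finite_range _).bddAbove ⟨τ, hτt⟩)

lemma Yglr_eq_glrW_change (hτt : τ < t) (hpost : ∀ i ∈ Finset.Ioc τ t, |x i - μ| ≤ η)
    (hpre : ∀ k < τ, |pS x τ - pS x k| ≤ √((τ : ℝ) - k) * B) (hB : 0 < B)
    (hη : 3 * η ≤ μ) (hμ : 3 * B + η ≤ μ) :
    Yglr x t = glrW x t τ := by
  refine Yglr_eq_glrW_of_forall_le hτt fun k hkt => ?_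
  rcases lt_trichotomy k τ with hkτ | rfl | hτk
  · exact glrW_le_glrW_of_pre_change hτt hpost hpre hB hμ hkτ
  · exact le_rfl
  · exact glrW_le_glrW_of_post_change hτt hpost hη (by linarith) hτk hkt

end ChangePoint

open scoped NNReal

namespace ProbabilityTheory

variable {Ω : Type*} {mΩ : MeasurableSpace Ω} {P : Measure Ω}

lemma hasSubgaussianMGF_sub_of_map_eq_gaussianReal {X : Ω → ℝ} {μ : ℝ} {v : ℝ≥0}
    (hX : P.map X = gaussianReal μ v) :
    HasSubgaussianMGF (fun ω => X ω - μ) v P := by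
  have hXm : AEMeasurable X P := aemeasurable_of_map_neZero (by rw [hX]; infer_instance)
  have hmap : P.map (fun ω => X ω - μ) = gaussianReal 0 v := by
    rw [show (fun ω => X ω - μ) = (· - μ) ∘ X from rfl,
      ← AEMeasurable.map_map_of_aemeasurable (by fun_prop) hXm, hX,
      gaussianReal_map_sub_const, sub_self]
  refine (HasSubgaussianMGF.id_map_iff (by fun_prop)).1 ?_
  rw [hmap]
  exact ⟨fun t => integrable_exp_mul_gaussianReal t,
    fun t => by simp [mgf_id_gaussianReal, mul_comm]⟩

lemma HasSubgaussianMGF.measureReal_abs_ge_le [IsFiniteMeasure P] {X : Ω → ℝ} {c : ℝ≥0}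
    (h : HasSubgaussianMGF X c P) {ε : ℝ} (hε : 0 ≤ ε) :
    P.real {ω | ε ≤ |X ω|} ≤ 2 * exp (-ε ^ 2 / (2 * c)) := by
  have hsub : {ω | ε ≤ |X ω|} ⊆ {ω | ε ≤ X ω} ∪ {ω | ε ≤ (-X) ω} := fun ω hω => by
    rcases le_abs'.1 (show ε ≤ |X ω| from hω) with h | h
    · exact Or.inr (show ε ≤ -X ω by linarith)
    · exact Or.inl h
  calc P.real {ω | ε ≤ |X ω|}
      ≤ P.real {ω | ε ≤ X ω} + P.real {ω | ε ≤ (-X) ω} :=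
        (measureReal_mono hsub).trans (measureReal_union_le _ _)
    _ ≤ 2 * exp (-ε ^ 2 / (2 * c)) := by
        linarith [h.measure_ge_le hε, h.neg.measure_ge_le hε]

lemma HasSubgaussianMGF.sum_of_iIndepFun_subtype {ι : Type*} {S : Set ι} {X : ι → Ω → ℝ}
    (h_indep : iIndepFun (fun i : S => X i) P) {c : ι → ℝ≥0} {s : Finset ι} (hs : ↑s ⊆ S)
    (h_subG : ∀ i ∈ s, HasSubgaussianMGF (X i) (c i) P) :
    HasSubgaussianMGF (fun ω => ∑ i ∈ s, X i ω) (∑ i ∈ s, c i) P := by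
  have h_indep' : iIndepFun (fun i : s => X i) P :=
    h_indep.precomp (g := fun i : s => (⟨i, hs i.2⟩ : S)) fun _ _ hij =>
      Subtype.ext (congrArg (Subtype.val : S → ι) hij)
  have := HasSubgaussianMGF.sum_of_iIndepFun h_indep' (c := fun i : s => c i)
    (s := Finset.univ) fun i _ => h_subG i i.2
  rw [Finset.sum_coe_sort s c] at this
  exact this.congr (ae_of_all _ fun ω => Finset.sum_coe_sort s fun i => X i ω)

lemma HasSubgaussianMGF.measureReal_sqrt_mul_le_abs_le [IsFiniteMeasure P] {X : Ω → ℝ}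
    {c : ℝ≥0} (h : HasSubgaussianMGF X c P) (hc : c ≠ 0) {B : ℝ} (hB : 0 ≤ B) :
    P.real {ω | √(c : ℝ) * B ≤ |X ω|} ≤ 2 * exp (-B ^ 2 / 2) := by
  have hc' : (0 : ℝ) < c := by positivity
  refine (h.measureReal_abs_ge_le (by positivity)).trans_eq ?_
  rw [mul_pow, Real.sq_sqrt hc'.le]
  field_simp

end ProbabilityTheory

lemma measureReal_biUnion_finset_le_card_mul {α ι : Type*} {m : MeasurableSpace α}
    {μ : Measure α} [IsFiniteMeasure μ] (s : Finset ι) (f : ι → Set α) {q : ℝ}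
    (hf : ∀ i ∈ s, μ.real (f i) ≤ q) :
    μ.real (⋃ i ∈ s, f i) ≤ s.card * q := by
  simpa using (measureReal_biUnion_finset_le s f).trans (Finset.sum_le_sum hf)

section ChangePointModel

variable {Ω : Type*} {mΩ : MeasurableSpace Ω} {P : Measure Ω} [IsProbabilityMeasure P]
  {X : ℕ → Ω → ℝ} {T τ t : ℕ} {μ σ B : ℝ}

lemma measureReal_post_change_deviation_le {i : ℕ} (hσ : 0 < σ) (hB : 0 ≤ B)
    (hXi : P.map (X i) = gaussianReal μ (σ ^ 2).toNNReal) :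
    P.real {ω | σ * B ≤ |X i ω - μ|} ≤ 2 * exp (-B ^ 2 / 2) := by
  have h := (hasSubgaussianMGF_sub_of_map_eq_gaussianReal hXi).measureReal_sqrt_mul_le_abs_le
    (by positivity) hB
  rwa [Real.coe_toNNReal _ (sq_nonneg σ), Real.sqrt_sq hσ.le] at h

lemma measureReal_pre_change_deviation_le (hτT : τ ≤ T)
    (hInd : iIndepFun (fun i : ↥(Set.Icc 1 T) => X i) P)
    (hpre : ∀ i, 1 ≤ i → i ≤ τ → P.map (X i) = gaussianReal 0 1) (hB : 0 ≤ B) {k : ℕ}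
    (hkτ : k < τ) :
    P.real {ω | √((τ : ℝ) - k) * B ≤ |pS (fun i => X i ω) τ - pS (fun i => X i ω) k|}
      ≤ 2 * exp (-B ^ 2 / 2) := by
  have hsum : HasSubgaussianMGF (fun ω => ∑ i ∈ Finset.Ioc k τ, X i ω)
      (∑ _i ∈ Finset.Ioc k τ, 1) P := by
    refine HasSubgaussianMGF.sum_of_iIndepFun_subtype hInd
      (fun i hi => ?_) fun i hi => ?_
    · have := Finset.mem_Ioc.1 hi; exact ⟨by omega, by omega⟩
    · have := Finset.mem_Ioc.1 hi
      simpa using hasSubgaussianMGF_sub_of_map_eq_gaussianReal (hpre i (by omega) this.2)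
  have hvar : ((∑ _i ∈ Finset.Ioc k τ, (1 : ℝ≥0) : ℝ≥0) : ℝ) = (τ : ℝ) - k := by
    rw [Finset.sum_const, Nat.card_Ioc, nsmul_one, NNReal.coe_natCast, Nat.cast_sub hkτ.le]
  have h := hsum.measureReal_sqrt_mul_le_abs_le
    (by rw [← NNReal.coe_ne_zero, hvar, sub_ne_zero]; exact_mod_cast hkτ.ne') hB
  simpa only [hvar, pS_sub_pS_eq_sum _ hkτ.le] using h

lemma measureReal_Yglr_ne_glrW_le (hτt : τ < t) (hτT : τ ≤ T)
    (hInd : iIndepFun (fun i : ↥(Set.Icc 1 T) => X i) P)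
    (hpre : ∀ i, 1 ≤ i → i ≤ τ → P.map (X i) = gaussianReal 0 1)
    (hpost : ∀ i, τ < i → i ≤ t → P.map (X i) = gaussianReal μ (σ ^ 2).toNNReal)
    (hσ : 0 < σ) (hB : 0 < B) (hη : 3 * (σ * B) ≤ μ) (hμ : 3 * B + σ * B ≤ μ) :
    P.real {ω | Yglr (fun i => X i ω) t ≠ glrW (fun i => X i ω) t τ}
      ≤ 2 * t * exp (-B ^ 2 / 2) := by
  set post := fun i => {ω | σ * B ≤ |X i ω - μ|}
  set pre := fun k : ℕ =>
    {ω | √((τ : ℝ) - k) * B ≤ |pS (fun i => X i ω) τ - pS (fun i => X i ω) k|}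
  have hsub : {ω | Yglr (fun i => X i ω) t ≠ glrW (fun i => X i ω) t τ}
      ⊆ (⋃ i ∈ Finset.Ioc τ t, post i) ∪ ⋃ k ∈ Finset.range τ, pre k := by
    intro ω hω
    by_contra hgood
    simp only [post, pre, Set.mem_union, Set.mem_iUnion, Set.mem_ofPred_eq, Finset.mem_range,
      not_or, not_exists, not_le] at hgood
    exact hω (Yglr_eq_glrW_change hτt (fun i hi => (hgood.1 i hi).le)
      (fun k hk => (hgood.2 k hk).le) hB hη hμ)
  have hpost_le := measureReal_biUnion_finset_le_card_mul (μ := P) (Finset.Ioc τ t) post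
    fun i hi => measureReal_post_change_deviation_le hσ hB.le
      (hpost i (Finset.mem_Ioc.1 hi).1 (Finset.mem_Ioc.1 hi).2)
  have hpre_le := measureReal_biUnion_finset_le_card_mul (μ := P) (Finset.range τ) pre
    fun k hk => measureReal_pre_change_deviation_le hτT hInd hpre hB.le (Finset.mem_range.1 hk)
  rw [Nat.card_Ioc, Nat.cast_sub hτt.le] at hpost_le
  rw [Finset.card_range] at hpre_le
  calc _ ≤ _ := measureReal_mono hsub
    _ ≤ _ := measureReal_union_le _ _
    _ ≤ _ := add_le_add hpost_le hpre_le
    _ = 2 * t * exp (-B ^ 2 / 2) := by ring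

end ChangePointModel

lemma tendsto_natCast_mul_exp_neg_sq_div {μs : ℕ → ℝ} {Ts : ℕ → ℕ}
    (hμ : Tendsto μs atTop atTop)
    (hrate : Tendsto (fun m => √(log (Ts m : ℝ)) / μs m) atTop (nhds 0)) {c : ℝ} (hc : 0 < c) :
    Tendsto (fun m => (Ts m : ℝ) * exp (-μs m ^ 2 / c)) atTop (nhds 0) := by
  have hlog : ∀ᶠ m in atTop, log (Ts m) ≤ μs m ^ 2 / (2 * c) := by
    filter_upwards [hμ.eventually_gt_atTop 0,
      hrate.eventually (gt_mem_nhds (Real.sqrt_pos.2 (by positivity : 0 < 1 / (2 * c))))]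
      with m hμm hm
    rw [div_lt_iff₀ hμm] at hm
    have := pow_le_pow_left₀ (Real.sqrt_nonneg _) hm.le 2
    rwa [mul_pow, Real.sq_sqrt (Real.log_natCast_nonneg _), Real.sq_sqrt (by positivity),
      one_div_mul_eq_div] at this
  have hbound : ∀ᶠ m in atTop, (Ts m : ℝ) * exp (-μs m ^ 2 / c) ≤ exp (-μs m ^ 2 / (2 * c)) := by
    filter_upwards [hlog] with m hm
    rcases Nat.eq_zero_or_pos (Ts m) with h0 | hpos
    · simp [h0, Real.exp_nonneg]
    · calc (Ts m : ℝ) * exp (-μs m ^ 2 / c)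
          ≤ exp (μs m ^ 2 / (2 * c)) * exp (-μs m ^ 2 / c) := by
            gcongr
            rw [← Real.exp_log (by exact_mod_cast hpos : (0 : ℝ) < Ts m)]
            exact Real.exp_le_exp.2 hm
        _ = exp (-μs m ^ 2 / (2 * c)) := by rw [← Real.exp_add]; congr 1; field_simp; ring
  have hexp : Tendsto (fun m => exp (-μs m ^ 2 / (2 * c))) atTop (nhds 0) := by
    refine Real.tendsto_exp_atBot.comp ?_
    simp_rw [neg_div]
    exact tendsto_neg_atTop_atBot.comp
      ((tendsto_pow_atTop two_ne_zero).comp hμ |>.atTop_div_const (by positivity))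
  exact squeeze_zero' (Eventually.of_forall fun m => by positivity) hbound hexp

theorem statement12_general (σ : ℝ) (hσ : 0 < σ) (μs : ℕ → ℝ) (Ts : ℕ → ℕ)
    (hμ : Tendsto μs atTop atTop)
    (hrate : Tendsto (fun m => Real.sqrt (Real.log (Ts m : ℝ)) / μs m) atTop (nhds 0)) :
    ∀ ε : ℝ, 0 < ε → ∃ M : ℕ, ∀ m : ℕ, M ≤ m →
      ∀ τ t : ℕ, 1 ≤ τ → τ < t → t ≤ Ts m →
      ∀ (Ω : Type) [MeasurableSpace Ω] (P : Measure Ω) [IsProbabilityMeasure P]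
        (X : ℕ → Ω → ℝ), (∀ i, Measurable (X i)) →
      iIndepFun (fun i : ↥(Set.Icc 1 (Ts m)) => X (i : ℕ)) P →
      (∀ i, 1 ≤ i → i ≤ τ → Measure.map (X i) P = gaussianReal 0 1) →
      (∀ i, τ < i → i ≤ Ts m → Measure.map (X i) P = gaussianReal (μs m) ((σ ^ 2).toNNReal)) →
      (P {ω | Yglr (fun i => X i ω) t ≠ glrW (fun i => X i ω) t τ}).toReal ≤ ε := by
  intro ε hε
  have hsmall := (tendsto_natCast_mul_exp_neg_sq_div hμ hrate
    (by positivity : (0 : ℝ) < 18 * (σ + 1) ^ 2)).eventually (ge_mem_nhds (half_pos hε))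
  obtain ⟨M, hM⟩ := eventually_atTop.1 ((hμ.eventually_gt_atTop 0).and hsmall)
  refine ⟨M, fun m hm τ t _ hτt htT Ω _ P _ X _ hInd hpre hpost => ?_⟩
  obtain ⟨hμm, hTm⟩ := hM m hm
  set B := μs m / (3 * (σ + 1)) with hBdef
  have hμB : μs m = 3 * (σ + 1) * B := by rw [hBdef]; field_simp
  have hB : 0 < B := by positivity
  have hexp : -B ^ 2 / 2 = -μs m ^ 2 / (18 * (σ + 1) ^ 2) := by
    rw [hμB]; field_simp; ring
  calc P.real {ω | Yglr (fun i => X i ω) t ≠ glrW (fun i => X i ω) t τ}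
      ≤ 2 * t * exp (-B ^ 2 / 2) :=
        measureReal_Yglr_ne_glrW_le hτt (hτt.le.trans htT) hInd hpre
          (fun i hτi hit => hpost i hτi (hit.trans htT)) hσ hB (by nlinarith) (by nlinarith)
    _ ≤ 2 * (Ts m * exp (-μs m ^ 2 / (18 * (σ + 1) ^ 2))) := by
        rw [hexp, mul_assoc]
        gcongr
    _ ≤ ε := by linarith

/-- with μ_m → ∞, 𝒯_m → ∞, √(log 𝒯_m)/μ_m → 0, P(Y_t^GLR ≠ W_{t,τ}) tends to 0 uniformly in 1 ≤ τ < t ≤ 𝒯_m: the GLR maximum is attained at the change point. -/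
theorem statement12 (σ : ℝ) (hσ : 0 < σ) (μs : ℕ → ℝ) (Ts : ℕ → ℕ)
    (hμ : Tendsto μs atTop atTop) (hT : Tendsto Ts atTop atTop)
    (hrate : Tendsto (fun m => Real.sqrt (Real.log (Ts m : ℝ)) / μs m) atTop (nhds 0)) :
    ∀ ε : ℝ, 0 < ε → ∃ M : ℕ, ∀ m : ℕ, M ≤ m →
      ∀ τ t : ℕ, 1 ≤ τ → τ < t → t ≤ Ts m →
      ∀ (Ω : Type) [MeasurableSpace Ω] (P : Measure Ω) [IsProbabilityMeasure P]
        (X : ℕ → Ω → ℝ), (∀ i, Measurable (X i)) →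
      iIndepFun (fun i : ↥(Set.Icc 1 (Ts m)) => X (i : ℕ)) P →
      (∀ i, 1 ≤ i → i ≤ τ → Measure.map (X i) P = gaussianReal 0 1) →
      (∀ i, τ < i → i ≤ Ts m → Measure.map (X i) P = gaussianReal (μs m) ((σ ^ 2).toNNReal)) →
      (P {ω | Yglr (fun i => X i ω) t ≠ glrW (fun i => X i ω) t τ}).toReal ≤ ε :=
  statement12_general σ hσ μs Ts hμ hrate

end
end

section
/- Fix c > 0 and let π_t^GLR be the null P-value function of the GLR statistic. For all sequences of reals x_m → ∞ and positive integers t_m → ∞ with t_m ≤ c·x_m², one has −2·log π_{t_m}^GLR(x_m) = x_m²·(1+o(1)) as m → ∞; equivalently, (−2·log π_{t_m}^GLR(x_m))/x_m² → 1. -/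
open MeasureTheory ProbabilityTheory Filter Real
open scoped ENNReal NNReal

noncomputable section

/-- Turn a finite vector `(X_1, …, X_t)` into a path `ℕ → ℝ` (1-indexed). -/
def toPath (t : ℕ) (v : Fin t → ℝ) : ℕ → ℝ :=
  fun i => if h : 1 ≤ i ∧ i ≤ t then v ⟨i - 1, by omega⟩ else 0

/-- Null P-value function of the GLR statistic:
`π_t^GLR(x) = P(Y_t^GLR ≥ x)` with `X_1, …, X_t` i.i.d. N(0,1). -/
def pvalGLR (t : ℕ) (x : ℝ) : ℝ :=
  ((Measure.pi fun _ : Fin t => gaussianReal 0 1)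
    {v : Fin t → ℝ | x ≤ Yglr (toPath t v) t}).toReal

section Aux
lemma pS_toPath {t : ℕ} (v : Fin t → ℝ) (m : ℕ) (hm : m ≤ t) :
    pS (toPath t v) m = ∑ j ∈ Finset.univ.filter (fun j : Fin t => (j : ℕ) < m), v j := by
  unfold pS
  refine Finset.sum_bij (fun a ha => (⟨a - 1, by have := Finset.mem_Icc.mp ha; omega⟩ : Fin t))
    (fun a ha => ?_) (fun a ha b hb h => ?_) (fun j hj => ?_) (fun a ha => ?_)
  · have := Finset.mem_Icc.mp ha
    simp only [Finset.mem_filter, Finset.mem_univ, true_and]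
    omega
  · have ha' := Finset.mem_Icc.mp ha
    have hb' := Finset.mem_Icc.mp hb
    simp only [Fin.mk.injEq] at h
    omega
  · simp only [Finset.mem_filter, Finset.mem_univ, true_and] at hj
    refine ⟨(j : ℕ) + 1, Finset.mem_Icc.mpr (by omega), ?_⟩
    simp [Fin.ext_iff]
  · have ha' := Finset.mem_Icc.mp ha
    unfold toPath
    rw [dif_pos ⟨ha'.1, le_trans ha'.2 hm⟩]

lemma card_filter_lt {t : ℕ} (m : ℕ) (hm : m ≤ t) :
    (Finset.univ.filter (fun j : Fin t => (j : ℕ) < m)).card = m := by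
  have h := pS_toPath (fun _ : Fin t => (1 : ℝ)) m hm
  have h1 : pS (toPath t (fun _ => (1:ℝ))) m = m := by
    unfold pS
    have he : ∀ i ∈ Finset.Icc 1 m, toPath t (fun _ => (1:ℝ)) i = 1 := by
      intro i hi; have := Finset.mem_Icc.mp hi
      unfold toPath; rw [dif_pos ⟨this.1, le_trans this.2 hm⟩]
    rw [Finset.sum_congr rfl he, Finset.sum_const, Nat.card_Icc]
    simp
  rw [h1, Finset.sum_const, nsmul_eq_mul, mul_one] at h
  exact_mod_cast h.symm

lemma pS_diff {t : ℕ} (v : Fin t → ℝ) {k : ℕ} (hk : k ≤ t) :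
    pS (toPath t v) t - pS (toPath t v) k
      = ∑ j ∈ Finset.univ.filter (fun j : Fin t => ¬ (j : ℕ) < k), v j := by
  rw [pS_toPath v t le_rfl, pS_toPath v k hk]
  have h := Finset.sum_filter_add_sum_filter_not Finset.univ (fun j : Fin t => (j : ℕ) < k) v
  have huniv : Finset.univ.filter (fun j : Fin t => (j : ℕ) < t) = Finset.univ := by
    ext j; simp [j.isLt]
  rw [huniv]
  linarith

lemma card_filter_not_lt {t : ℕ} (k : ℕ) (hk : k ≤ t) :
    (Finset.univ.filter (fun j : Fin t => ¬ (j : ℕ) < k)).card = t - k := by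
  have h := Finset.card_filter_add_card_filter_not (s := Finset.univ)
    (p := fun j : Fin t => (j : ℕ) < k)
  rw [card_filter_lt k hk, Finset.card_univ, Fintype.card_fin] at h
  omega

lemma gauss_pt (l y : ℝ) :
    gaussianPDFReal 0 1 y * rexp (l * y) = rexp (l ^ 2 / 2) * gaussianPDFReal l 1 y := by
  unfold gaussianPDFReal
  push_cast
  rw [mul_one]
  rw [mul_comm (rexp (l^2/2)), mul_assoc, mul_assoc, ← Real.exp_add, ← Real.exp_add]
  congr 1
  ring

lemma lintegral_exp_gauss (l : ℝ) :
    ∫⁻ y, ENNReal.ofReal (rexp (l * y)) ∂(gaussianReal 0 1)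
      = ENNReal.ofReal (rexp (l ^ 2 / 2)) := by
  rw [gaussianReal_of_var_ne_zero 0 one_ne_zero,
    lintegral_withDensity_eq_lintegral_mul _ (measurable_gaussianPDF 0 1)
      ((by fun_prop : Measurable fun y : ℝ => ENNReal.ofReal (rexp (l * y))))]
  have : ∀ y : ℝ, (gaussianPDF 0 1 * fun y => ENNReal.ofReal (rexp (l * y))) y
      = ENNReal.ofReal (rexp (l ^ 2 / 2)) * gaussianPDF l 1 y := by
    intro y
    simp only [Pi.mul_apply, gaussianPDF]
    rw [← ENNReal.ofReal_mul (gaussianPDFReal_nonneg 0 1 y), gauss_pt l y,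
      ENNReal.ofReal_mul (Real.exp_nonneg _)]
  rw [show (fun y => (gaussianPDF 0 1 * fun y => ENNReal.ofReal (rexp (l * y))) y)
      = fun y => ENNReal.ofReal (rexp (l ^ 2 / 2)) * gaussianPDF l 1 y from funext this]
  rw [lintegral_const_mul _ (measurable_gaussianPDF l 1),
    lintegral_gaussianPDF_eq_one l one_ne_zero, mul_one]

lemma lintegral_pi_gauss : ∀ {n : ℕ} (f : Fin n → ℝ → ℝ≥0∞), (∀ i, Measurable (f i)) →
    ∫⁻ v, ∏ i, f i (v i) ∂(Measure.pi fun _ : Fin n => gaussianReal 0 1)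
      = ∏ i, ∫⁻ y, f i y ∂(gaussianReal 0 1) := by
  intro n
  induction n with
  | zero =>
    intro f hf
    simp
  | succ n ih =>
    intro f hf
    have hmp := measurePreserving_piFinSuccAbove (fun _ : Fin (n+1) => gaussianReal 0 1) 0
    set g : ℝ × (Fin n → ℝ) → ℝ≥0∞ := fun p => f 0 p.1 * ∏ i, f i.succ (p.2 i) with hg
    have hgm : Measurable g := by
      apply ((hf 0).comp measurable_fst).mul
      exact (Finset.measurable_prod _ fun i _ => (hf i.succ).comp (measurable_pi_apply i |>.comp measurable_snd))
    have h1 : ∀ v : Fin (n+1) → ℝ, g ((MeasurableEquiv.piFinSuccAbove (fun _ => ℝ) 0) v) = ∏ i, f i (v i) := by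
      intro v
      rw [Fin.prod_univ_succ]
      simp [g, MeasurableEquiv.piFinSuccAbove, Fin.removeNth, Fin.succAbove_zero, Fin.tail]
    calc ∫⁻ v, ∏ i, f i (v i) ∂(Measure.pi fun _ : Fin (n+1) => gaussianReal 0 1)
        = ∫⁻ v, g ((MeasurableEquiv.piFinSuccAbove (fun _ => ℝ) 0) v)
            ∂(Measure.pi fun _ : Fin (n+1) => gaussianReal 0 1) := by
          simp_rw [h1]
      _ = ∫⁻ p, g p ∂((gaussianReal 0 1).prod (Measure.pi fun _ : Fin n => gaussianReal 0 1)) := by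
          exact hmp.lintegral_comp hgm
      _ = (∫⁻ y, f 0 y ∂(gaussianReal 0 1)) * ∫⁻ w, ∏ i, f i.succ (w i)
            ∂(Measure.pi fun _ : Fin n => gaussianReal 0 1) := by
          exact lintegral_prod_mul (hf 0).aemeasurable
            (Finset.measurable_prod _ fun (i : Fin n) _ => (hf i.succ).comp (measurable_pi_apply i)).aemeasurable
      _ = ∏ i, ∫⁻ y, f i y ∂(gaussianReal 0 1) := by
          rw [ih _ (fun i => hf i.succ), Fin.prod_univ_succ]

lemma chernoff_key (a n : ℝ) (hn : 0 < n) :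
    n * (a / n) ^ 2 / 2 - a / n * a = -a ^ 2 / (2 * n) := by
  have h : n ≠ 0 := ne_of_gt hn
  field_simp
  ring

lemma chernoff {t : ℕ} (s : Finset (Fin t)) (hs : s.Nonempty) {ε : ℝ} (hε : ε ^ 2 = 1)
    {a : ℝ} (ha : 0 ≤ a) :
    (Measure.pi fun _ : Fin t => gaussianReal 0 1) {v | a ≤ ε * ∑ i ∈ s, v i}
      ≤ ENNReal.ofReal (rexp (-a ^ 2 / (2 * s.card))) := by
  classical
  set n := s.card with hncard
  have hn : 0 < n := Finset.card_pos.mpr hs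
  have hn' : (0:ℝ) < n := by exact_mod_cast hn
  set l : ℝ := a / n with hl
  have hl0 : 0 ≤ l := div_nonneg ha hn'.le
  set f : Fin t → ℝ → ℝ≥0∞ :=
    fun i y => if i ∈ s then ENNReal.ofReal (rexp (l * ε * y)) else 1 with hfdef
  have hfm : ∀ i, Measurable (f i) := by
    intro i
    by_cases hi : i ∈ s <;> simp only [hfdef, hi, if_true, if_false]
    · fun_prop
    · exact measurable_const
  have hint : ∫⁻ v, ENNReal.ofReal (rexp (l * (ε * ∑ i ∈ s, v i)))
      ∂(Measure.pi fun _ : Fin t => gaussianReal 0 1)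
      = ENNReal.ofReal (rexp ((n : ℝ) * l ^ 2 / 2)) := by
    have hpt : ∀ v : Fin t → ℝ, ENNReal.ofReal (rexp (l * (ε * ∑ i ∈ s, v i)))
        = ∏ i : Fin t, f i (v i) := by
      intro v
      have h1 : l * (ε * ∑ i ∈ s, v i) = ∑ i ∈ s, l * ε * v i := by
        rw [Finset.mul_sum, Finset.mul_sum]; ring_nf
      rw [h1, Real.exp_sum, ENNReal.ofReal_prod_of_nonneg (fun _ _ => (Real.exp_nonneg _))]
      rw [← Finset.univ_inter s, ← Finset.prod_ite_mem]
    simp_rw [hpt]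
    rw [lintegral_pi_gauss f hfm]
    have heach : ∀ i : Fin t, ∫⁻ y, f i y ∂(gaussianReal 0 1)
        = if i ∈ s then ENNReal.ofReal (rexp (l ^ 2 / 2)) else 1 := by
      intro i
      by_cases hi : i ∈ s <;> simp only [hfdef, hi, if_true, if_false]
      · rw [lintegral_exp_gauss (l * ε), mul_pow, hε, mul_one]
      · simp
    rw [Finset.prod_congr rfl (fun i _ => heach i), Finset.prod_ite_mem,
      Finset.univ_inter, Finset.prod_const, ← hncard,
      ← ENNReal.ofReal_pow (Real.exp_nonneg _), ← Real.exp_nat_mul]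
    congr 2
    ring
  have key : (n:ℝ) * l ^ 2 / 2 - l * a = -a ^ 2 / (2 * (n:ℝ)) := by
    rw [hl]; exact chernoff_key a n hn'
  have hsub : {v : Fin t → ℝ | a ≤ ε * ∑ i ∈ s, v i}
      ⊆ {v : Fin t → ℝ | ENNReal.ofReal (rexp (l * a))
          ≤ ENNReal.ofReal (rexp (l * (ε * ∑ i ∈ s, v i)))} := by
    intro v hv
    exact ENNReal.ofReal_le_ofReal (Real.exp_le_exp.mpr
      (mul_le_mul_of_nonneg_left hv hl0))
  have hmarkov := mul_meas_ge_le_lintegral₀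
    (μ := Measure.pi fun _ : Fin t => gaussianReal 0 1)
    (f := fun v => ENNReal.ofReal (rexp (l * (ε * ∑ i ∈ s, v i))))
    (by
      apply Measurable.aemeasurable
      fun_prop) (ENNReal.ofReal (rexp (l * a)))
  rw [hint] at hmarkov
  calc (Measure.pi fun _ : Fin t => gaussianReal 0 1) {v | a ≤ ε * ∑ i ∈ s, v i}
      ≤ (Measure.pi fun _ : Fin t => gaussianReal 0 1)
          {v | ENNReal.ofReal (rexp (l * a))
            ≤ ENNReal.ofReal (rexp (l * (ε * ∑ i ∈ s, v i)))} := measure_mono hsub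
    _ ≤ ENNReal.ofReal (rexp ((n : ℝ) * l ^ 2 / 2)) / ENNReal.ofReal (rexp (l * a)) := by
        rw [ENNReal.le_div_iff_mul_le (Or.inl (by positivity)) (Or.inl ENNReal.ofReal_ne_top),
          mul_comm]
        exact hmarkov
    _ = ENNReal.ofReal (rexp (-a ^ 2 / (2 * n))) := by
        rw [← ENNReal.ofReal_div_of_pos (Real.exp_pos _), ← Real.exp_sub, key]

lemma gauss_tail_lower {x : ℝ} (hx : 0 ≤ x) :
    ENNReal.ofReal ((Real.sqrt (2 * π))⁻¹ * rexp (-(x + 1) ^ 2 / 2))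
      ≤ gaussianReal 0 1 (Set.Ici x) := by
  rw [gaussianReal_apply 0 one_ne_zero]
  have h1 : ENNReal.ofReal ((Real.sqrt (2 * π))⁻¹ * rexp (-(x + 1) ^ 2 / 2))
      = ∫⁻ _ in Set.Icc x (x + 1), ENNReal.ofReal ((Real.sqrt (2 * π))⁻¹ * rexp (-(x + 1) ^ 2 / 2)) ∂volume := by
    rw [setLIntegral_const, Real.volume_Icc]
    norm_num
  rw [h1]
  refine le_trans (setLIntegral_mono (measurable_gaussianPDF 0 1) ?_)
    (lintegral_mono_set Set.Icc_subset_Ici_self)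
  intro y hy
  obtain ⟨hy1, hy2⟩ := hy
  unfold gaussianPDF
  apply ENNReal.ofReal_le_ofReal
  unfold gaussianPDFReal
  simp only [NNReal.coe_one, mul_one, sub_zero]
  apply mul_le_mul_of_nonneg_left _ (by positivity)
  apply Real.exp_le_exp.mpr
  have : y ^ 2 ≤ (x + 1) ^ 2 := by nlinarith
  linarith

lemma coord_measure {t : ℕ} (i : Fin t) (x : ℝ) :
    (Measure.pi fun _ : Fin t => gaussianReal 0 1) {v | x ≤ v i}
      = gaussianReal 0 1 (Set.Ici x) := by
  classical
  have hset : {v : Fin t → ℝ | x ≤ v i}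
      = Set.pi Set.univ (fun j => if j = i then Set.Ici x else Set.univ) := by
    ext v
    simp only [Set.mem_setOf_eq, Set.mem_pi, Set.mem_univ, true_imp_iff]
    constructor
    · intro h j
      by_cases hj : j = i
      · subst hj; simpa using h
      · simp [hj]
    · intro h
      have := h i
      simpa using this
  rw [hset, Measure.pi_pi]
  have : ∀ j : Fin t, gaussianReal 0 1 (if j = i then Set.Ici x else Set.univ)
      = if j = i then gaussianReal 0 1 (Set.Ici x) else 1 := by
    intro j; by_cases hj : j = i <;> simp [hj]
  rw [Finset.prod_congr rfl (fun j _ => this j), Finset.prod_ite_eq' Finset.univ i]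
  simp

lemma pval_lower {t : ℕ} (ht : 0 < t) {x : ℝ} (hx : 0 ≤ x) :
    ENNReal.ofReal ((Real.sqrt (2 * π))⁻¹ * rexp (-(x + 1) ^ 2 / 2))
      ≤ (Measure.pi fun _ : Fin t => gaussianReal 0 1) {v | x ≤ Yglr (toPath t v) t} := by
  classical
  set i : Fin t := ⟨t - 1, by omega⟩ with hidef
  have hsub : {v : Fin t → ℝ | x ≤ v i} ⊆ {v : Fin t → ℝ | x ≤ Yglr (toPath t v) t} := by
    intro v hv
    simp only [Set.mem_setOf_eq] at hv ⊢
    have hkey : glrW (toPath t v) t ((i : ℕ)) = |v i| := by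
      unfold glrW
      have hset2 : Finset.univ.filter (fun j : Fin t => ¬ (j : ℕ) < (i : ℕ)) = {i} := by
        ext j
        simp only [Finset.mem_filter, Finset.mem_univ, true_and, Finset.mem_singleton,
          Fin.ext_iff, hidef]
        have := j.isLt
        omega
      rw [pS_diff v (by omega : (i : ℕ) ≤ t), hset2, Finset.sum_singleton]
      have hc : ((i : ℕ) : ℝ) = (t : ℝ) - 1 := by
        rw [hidef]
        push_cast [Nat.cast_sub ht]
        ring
      rw [hc]
      have : (t : ℝ) - ((t : ℝ) - 1) = 1 := by ring
      rw [this, Real.sqrt_one, div_one]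
    have hb : BddAbove (Set.range fun k : Fin t => glrW (toPath t v) t (k : ℕ)) :=
      (Set.finite_range _).bddAbove
    have hle := le_ciSup hb i
    calc x ≤ v i := hv
      _ ≤ |v i| := le_abs_self _
      _ = glrW (toPath t v) t ((i : ℕ)) := hkey.symm
      _ ≤ Yglr (toPath t v) t := hle
  calc ENNReal.ofReal ((Real.sqrt (2 * π))⁻¹ * rexp (-(x + 1) ^ 2 / 2))
      ≤ gaussianReal 0 1 (Set.Ici x) := gauss_tail_lower hx
    _ = (Measure.pi fun _ : Fin t => gaussianReal 0 1) {v | x ≤ v i} := (coord_measure i x).symm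
    _ ≤ _ := measure_mono hsub

lemma Ek_bound {t : ℕ} {x : ℝ} (hx : 0 ≤ x) (k : Fin t) :
    (Measure.pi fun _ : Fin t => gaussianReal 0 1) {v | x ≤ glrW (toPath t v) t (k : ℕ)}
      ≤ 2 * ENNReal.ofReal (rexp (-x ^ 2 / 2)) := by
  classical
  set s : Finset (Fin t) := Finset.univ.filter (fun j : Fin t => ¬ (j : ℕ) < (k : ℕ)) with hsdef
  have hcard : s.card = t - (k : ℕ) := card_filter_not_lt _ k.isLt.le
  have hn : 0 < t - (k : ℕ) := by omega
  have hs : s.Nonempty := Finset.card_pos.mp (by rw [hcard]; omega)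
  have hncast : ((t - (k : ℕ) : ℕ) : ℝ) = (t : ℝ) - (k : ℝ) := by
    rw [Nat.cast_sub k.isLt.le]
  have hnpos : (0:ℝ) < ((t - (k : ℕ) : ℕ) : ℝ) := by exact_mod_cast hn
  set a : ℝ := x * Real.sqrt ((t - (k : ℕ) : ℕ) : ℝ) with hadef
  have ha : 0 ≤ a := mul_nonneg hx (Real.sqrt_nonneg _)
  have hexp : -a ^ 2 / (2 * (s.card : ℝ)) = -x ^ 2 / 2 := by
    rw [hadef, hcard, mul_pow, Real.sq_sqrt hnpos.le]
    rw [neg_div, neg_div, mul_comm (2:ℝ), ← div_div, mul_div_assoc,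
      div_self (ne_of_gt hnpos), mul_one]
  have h1 := chernoff s hs (ε := 1) (by norm_num) ha
  have h2 := chernoff s hs (ε := -1) (by norm_num) ha
  rw [hexp] at h1 h2
  have hsub : {v : Fin t → ℝ | x ≤ glrW (toPath t v) t (k : ℕ)}
      ⊆ {v : Fin t → ℝ | a ≤ 1 * ∑ i ∈ s, v i} ∪ {v | a ≤ -1 * ∑ i ∈ s, v i} := by
    intro v hv
    simp only [Set.mem_setOf_eq, glrW] at hv
    rw [pS_diff v k.isLt.le, ← hsdef] at hv
    have hsq : Real.sqrt ((t : ℝ) - (k : ℝ)) = Real.sqrt ((t - (k : ℕ) : ℕ) : ℝ) := by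
      rw [hncast]
    rw [hsq] at hv
    have hsqp : 0 < Real.sqrt ((t - (k : ℕ) : ℕ) : ℝ) := Real.sqrt_pos.mpr hnpos
    have habs : a ≤ |∑ j ∈ s, v j| := by
      rw [hadef]
      calc x * Real.sqrt ((t - (k : ℕ) : ℕ) : ℝ)
          ≤ (|∑ j ∈ s, v j| / Real.sqrt ((t - (k : ℕ) : ℕ) : ℝ))
            * Real.sqrt ((t - (k : ℕ) : ℕ) : ℝ) := by
            exact mul_le_mul_of_nonneg_right hv hsqp.le
        _ = |∑ j ∈ s, v j| := div_mul_cancel₀ _ (ne_of_gt hsqp)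
    rcases le_abs.mp habs with h | h
    · exact Or.inl (by simpa using h)
    · exact Or.inr (by simpa using h)
  calc (Measure.pi fun _ : Fin t => gaussianReal 0 1) {v | x ≤ glrW (toPath t v) t (k : ℕ)}
      ≤ (Measure.pi fun _ : Fin t => gaussianReal 0 1)
          ({v : Fin t → ℝ | a ≤ 1 * ∑ i ∈ s, v i} ∪ {v | a ≤ -1 * ∑ i ∈ s, v i}) :=
        measure_mono hsub
    _ ≤ _ + _ := measure_union_le _ _
    _ ≤ ENNReal.ofReal (rexp (-x ^ 2 / 2)) + ENNReal.ofReal (rexp (-x ^ 2 / 2)) :=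
        add_le_add h1 h2
    _ = 2 * ENNReal.ofReal (rexp (-x ^ 2 / 2)) := (two_mul _).symm

lemma pval_upper {t : ℕ} (ht : 0 < t) {x : ℝ} (hx : 0 ≤ x) :
    (Measure.pi fun _ : Fin t => gaussianReal 0 1) {v | x ≤ Yglr (toPath t v) t}
      ≤ (t : ℝ≥0∞) * (2 * ENNReal.ofReal (rexp (-x ^ 2 / 2))) := by
  haveI : Nonempty (Fin t) := Fin.pos_iff_nonempty.mp ht
  have hsub : {v : Fin t → ℝ | x ≤ Yglr (toPath t v) t}
      ⊆ ⋃ k : Fin t, {v : Fin t → ℝ | x ≤ glrW (toPath t v) t (k : ℕ)} := by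
    intro v hv
    obtain ⟨k0, hk0⟩ := Finite.exists_max (fun k : Fin t => glrW (toPath t v) t (k : ℕ))
    have hY : Yglr (toPath t v) t ≤ glrW (toPath t v) t (k0 : ℕ) := ciSup_le hk0
    exact Set.mem_iUnion.mpr ⟨k0, le_trans hv hY⟩
  calc (Measure.pi fun _ : Fin t => gaussianReal 0 1) {v | x ≤ Yglr (toPath t v) t}
      ≤ ∑' k : Fin t, (Measure.pi fun _ : Fin t => gaussianReal 0 1)
          {v : Fin t → ℝ | x ≤ glrW (toPath t v) t (k : ℕ)} :=
        le_trans (measure_mono hsub) (measure_iUnion_le _)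
    _ = ∑ k : Fin t, (Measure.pi fun _ : Fin t => gaussianReal 0 1)
          {v : Fin t → ℝ | x ≤ glrW (toPath t v) t (k : ℕ)} := tsum_fintype _
    _ ≤ ∑ _k : Fin t, 2 * ENNReal.ofReal (rexp (-x ^ 2 / 2)) :=
        Finset.sum_le_sum (fun k _ => Ek_bound hx k)
    _ = (t : ℝ≥0∞) * (2 * ENNReal.ofReal (rexp (-x ^ 2 / 2))) := by
        rw [Finset.sum_const, Finset.card_univ, Fintype.card_fin, nsmul_eq_mul]

end Aux

/-- for fixed c > 0 and sequences x_m → ∞ and positive integers t_m → ∞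
with t_m ≤ c·x_m², one has −2 log π_{t_m}^GLR(x_m) = x_m² (1+o(1)),
i.e. (−2 log π_{t_m}^GLR(x_m))/x_m² → 1. -/
theorem statement14 (c : ℝ) (hc : 0 < c) (x : ℕ → ℝ) (t : ℕ → ℕ)
    (hx : Tendsto x atTop atTop) (htpos : ∀ m, 0 < t m) (ht : Tendsto t atTop atTop)
    (hbound : ∀ m, (t m : ℝ) ≤ c * (x m) ^ 2) :
    Tendsto (fun m => (-2 * Real.log (pvalGLR (t m) (x m))) / (x m) ^ 2) atTop (nhds 1) := by
  have hsqrtpi : (0:ℝ) < Real.sqrt (2 * π) := Real.sqrt_pos.mpr (by positivity)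
  -- real-valued bounds on pvalGLR, valid whenever 0 ≤ x m
  have hup : ∀ m, 0 ≤ x m → pvalGLR (t m) (x m)
      ≤ 2 * (t m : ℝ) * rexp (-(x m) ^ 2 / 2) := by
    intro m hm
    have h := pval_upper (htpos m) hm
    have heq : ((t m : ℕ) : ℝ≥0∞) * (2 * ENNReal.ofReal (rexp (-(x m) ^ 2 / 2)))
        = ENNReal.ofReal (2 * (t m : ℝ) * rexp (-(x m) ^ 2 / 2)) := by
      rw [← ENNReal.ofReal_natCast (t m), ← ENNReal.ofReal_ofNat,
        ← ENNReal.ofReal_mul (by norm_num), ← ENNReal.ofReal_mul (by positivity)]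
      ring_nf
    rw [heq] at h
    exact ENNReal.toReal_le_of_le_ofReal (by positivity) h
  have hlow : ∀ m, 0 ≤ x m →
      (Real.sqrt (2 * π))⁻¹ * rexp (-(x m + 1) ^ 2 / 2) ≤ pvalGLR (t m) (x m) := by
    intro m hm
    have h := pval_lower (htpos m) hm
    exact (ENNReal.ofReal_le_iff_le_toReal (measure_ne_top _ _)).mp h
  have hppos : ∀ m, 0 ≤ x m → 0 < pvalGLR (t m) (x m) := by
    intro m hm
    exact lt_of_lt_of_le (by positivity) (hlow m hm)
  -- limits
  have hx2 : Tendsto (fun m => (x m) ^ 2) atTop atTop :=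
    (tendsto_pow_atTop (two_ne_zero)).comp hx
  have hinv : Tendsto (fun m => ((x m) ^ 2)⁻¹) atTop (nhds 0) := hx2.inv_tendsto_atTop
  have hxinv : Tendsto (fun m => (x m)⁻¹) atTop (nhds 0) := hx.inv_tendsto_atTop
  have hlogdiv : Tendsto (fun m => Real.log (x m) / (x m) ^ 2) atTop (nhds 0) := by
    have h1 : Tendsto (fun y : ℝ => Real.log y / y) atTop (nhds 0) :=
      Real.isLittleO_log_id_atTop.tendsto_div_nhds_zero
    have h0 : Tendsto (fun y : ℝ => Real.log y / y ^ 2) atTop (nhds 0) := by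
      have := h1.mul tendsto_inv_atTop_zero
      simp only [mul_zero] at this
      refine this.congr (fun y => ?_)
      rw [pow_two, ← div_div, div_eq_mul_inv]
      rw [div_eq_mul_inv]
    exact h0.comp hx
  set lo : ℕ → ℝ := fun m => ((x m) ^ 2 - 2 * Real.log (2 * c) - 4 * Real.log (x m)) / (x m) ^ 2
    with hlo_def
  set hi : ℕ → ℝ := fun m => (2 * Real.log (Real.sqrt (2 * π)) + (x m + 1) ^ 2) / (x m) ^ 2
    with hhi_def
  have hx1 : ∀ᶠ m in atTop, 1 ≤ x m := hx.eventually_ge_atTop 1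
  have hlo_tendsto : Tendsto lo atTop (nhds 1) := by
    have hmain : Tendsto (fun m => 1 - 2 * Real.log (2 * c) * ((x m) ^ 2)⁻¹
        - 4 * (Real.log (x m) / (x m) ^ 2)) atTop (nhds 1) := by
      have := ((tendsto_const_nhds (x := (1:ℝ)) (f := atTop)).sub
        ((tendsto_const_nhds (x := 2 * Real.log (2 * c)) (f := atTop)).mul hinv)).sub
        ((tendsto_const_nhds (x := (4:ℝ)) (f := atTop)).mul hlogdiv)
      simpa using this
    refine Tendsto.congr' ?_ hmain
    filter_upwards [hx1] with m hm
    have hx2ne : (x m) ^ 2 ≠ 0 := by positivity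
    rw [hlo_def]
    field_simp
  have hhi_tendsto : Tendsto hi atTop (nhds 1) := by
    have hmain : Tendsto (fun m => 2 * Real.log (Real.sqrt (2 * π)) * ((x m) ^ 2)⁻¹
        + (1 + (x m)⁻¹) ^ 2) atTop (nhds 1) := by
      have := ((tendsto_const_nhds (x := 2 * Real.log (Real.sqrt (2 * π))) (f := atTop)).mul
        hinv).add (((tendsto_const_nhds (x := (1:ℝ)) (f := atTop)).add hxinv).pow 2)
      simpa using this
    refine Tendsto.congr' ?_ hmain
    filter_upwards [hx1] with m hm
    have hxne : x m ≠ 0 := by linarith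
    rw [hhi_def]
    field_simp
  -- squeeze
  refine tendsto_of_tendsto_of_tendsto_of_le_of_le' hlo_tendsto hhi_tendsto ?_ ?_
  · filter_upwards [hx1] with m hm
    have hm0 : (0:ℝ) ≤ x m := by linarith
    have hX2 : (0:ℝ) < (x m) ^ 2 := by positivity
    have hp := hppos m hm0
    have hU : pvalGLR (t m) (x m) ≤ 2 * c * (x m) ^ 2 * rexp (-(x m) ^ 2 / 2) := by
      refine le_trans (hup m hm0) ?_
      have := hbound m
      nlinarith [Real.exp_pos (-(x m) ^ 2 / 2), (htpos m)]
    have hUpos : (0:ℝ) < 2 * c * (x m) ^ 2 * rexp (-(x m) ^ 2 / 2) := by positivity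
    have hlogU : Real.log (2 * c * (x m) ^ 2 * rexp (-(x m) ^ 2 / 2))
        = Real.log (2 * c) + 2 * Real.log (x m) + (-(x m) ^ 2 / 2) := by
      rw [Real.log_mul (by positivity) (Real.exp_ne_zero _),
        Real.log_mul (by positivity) (by positivity), Real.log_exp, Real.log_pow]
      push_cast
      ring
    have hlogle := Real.log_le_log hp hU
    rw [hlogU] at hlogle
    have hnum : (x m) ^ 2 - 2 * Real.log (2 * c) - 4 * Real.log (x m)
        ≤ -2 * Real.log (pvalGLR (t m) (x m)) := by linarith
    show ((x m) ^ 2 - 2 * Real.log (2 * c) - 4 * Real.log (x m)) / (x m) ^ 2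
      ≤ (-2 * Real.log (pvalGLR (t m) (x m))) / (x m) ^ 2
    gcongr
  · filter_upwards [hx1] with m hm
    have hm0 : (0:ℝ) ≤ x m := by linarith
    have hX2 : (0:ℝ) < (x m) ^ 2 := by positivity
    have hp := hppos m hm0
    have hL := hlow m hm0
    have hLpos : (0:ℝ) < (Real.sqrt (2 * π))⁻¹ * rexp (-(x m + 1) ^ 2 / 2) := by positivity
    have hlogL : Real.log ((Real.sqrt (2 * π))⁻¹ * rexp (-(x m + 1) ^ 2 / 2))
        = -Real.log (Real.sqrt (2 * π)) + (-(x m + 1) ^ 2 / 2) := by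
      rw [Real.log_mul (by positivity) (Real.exp_ne_zero _), Real.log_inv, Real.log_exp]
    have hlogge := Real.log_le_log hLpos hL
    rw [hlogL] at hlogge
    have hnum : -2 * Real.log (pvalGLR (t m) (x m))
        ≤ 2 * Real.log (Real.sqrt (2 * π)) + (x m + 1) ^ 2 := by linarith
    show (-2 * Real.log (pvalGLR (t m) (x m))) / (x m) ^ 2
      ≤ (2 * Real.log (Real.sqrt (2 * π)) + (x m + 1) ^ 2) / (x m) ^ 2
    gcongr


end
end

section
/- Let μ > 0, σ > 0, ε > 0, and let τ ≤ t be nonnegative integers. Suppose X_{τ+1},…,X_t are i.i.d. N(μ, σ²) with partial sums S_k (S_0 = 0), and define the CUSUM quantities V_{t,k} = (S_t − S_k − (μ/2)(t−k))·μ. Then P(max_{τ≤k≤t} V_{t,k} ≥ V_{t,τ} + ε) ≤ Σ_{m=1}^{t−τ} Φ(−μ√m/(2σ)) ≤ (1/2)·e^{−μ²/(8σ²)}/(1 − e^{−μ²/(8σ²)}), where Φ is the standard normal cumulative distribution function. -/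
open MeasureTheory ProbabilityTheory Filter Real

noncomputable section

/-- Standard normal CDF Φ. -/
def stdCDF (x : ℝ) : ℝ := ((gaussianReal 0 1) (Set.Iic x)).toReal

/-!
On the event in question the maximum is attained at some `k = τ + m` with `m ≥ 1`, and
`V_{t,τ+m} - V_{t,τ} = (μ m / 2 - (S_{τ+m} - S_τ)) μ ≥ ε > 0` forces the block sum
`S_{τ+m} - S_τ ~ N(m μ, m σ²)` below `μ m / 2`, an event of probability `Φ(-μ√m/(2σ))`;
the union bound over `m` gives the first inequality. For the second, shifting the
integration variable gives the tail bound `Φ(-x) ≤ e^{-x²/2} Φ(0) = e^{-x²/2}/2` for `x ≥ 0`,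
so the `m`-th term is at most `r^m / 2` with `r = e^{-μ²/(8σ²)}`, and the geometric series
is summed.
-/

open scoped NNReal
open Finset

lemma ProbabilityTheory.iIndepFun.map_sum_eq_gaussianReal {ι Ω : Type*} [MeasurableSpace Ω]
    {P : Measure Ω} [IsProbabilityMeasure P] {X : ι → Ω → ℝ} (hX : ∀ i, Measurable (X i))
    (hindep : iIndepFun X P) {a : ℝ} {v : ℝ≥0} (hlaw : ∀ i, P.map (X i) = gaussianReal a v)
    (s : Finset ι) : P.map (∑ i ∈ s, X i) = gaussianReal (#s * a) (#s * v) := by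
  classical
  induction s using Finset.induction_on with
  | empty => simp [gaussianReal_zero_var, Pi.zero_def]
  | insert i s hi ih =>
    rw [sum_insert hi, add_comm, gaussianReal_add_gaussianReal_of_indepFun
      (hindep.indepFun_finsetSum_of_notMem hX hi) ih (hlaw i), card_insert_of_notMem hi]
    push_cast
    congr 1 <;> ring

lemma map_sum_Ioc_eq_gaussianReal {Ω : Type*} [MeasurableSpace Ω] {P : Measure Ω}
    [IsProbabilityMeasure P] {τ t : ℕ} {X : ℕ → Ω → ℝ} (hX : ∀ i, Measurable (X i))
    (hindep : iIndepFun (fun i : ↥(Set.Ioc τ t) => X i) P) {a : ℝ} {v : ℝ≥0}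
    (hlaw : ∀ i, τ < i → i ≤ t → P.map (X i) = gaussianReal a v) {m : ℕ} (hm : τ + m ≤ t) :
    P.map (fun ω => ∑ i ∈ Ioc τ (τ + m), X i ω) = gaussianReal (m * a) (m * v) := by
  classical
  have hblock : ∀ i ∈ Ioc τ (τ + m), i ∈ Set.Ioc τ t := fun i hi =>
    ⟨(mem_Ioc.1 hi).1, (mem_Ioc.1 hi).2.trans hm⟩
  have hsum : (fun ω => ∑ i ∈ Ioc τ (τ + m), X i ω)
      = ∑ i ∈ (Ioc τ (τ + m)).subtype (· ∈ Set.Ioc τ t), X i := by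
    ext ω
    rw [Finset.sum_apply, sum_subtype_of_mem (fun i => X i ω) hblock]
  have hcard : #((Ioc τ (τ + m)).subtype (· ∈ Set.Ioc τ t)) = m := by
    rw [card_subtype, filter_true_of_mem hblock, Nat.card_Ioc, Nat.add_sub_cancel_left]
  rw [hsum, hindep.map_sum_eq_gaussianReal (X := fun i : ↥(Set.Ioc τ t) => X i) (fun i => hX i)
    (fun i => hlaw i i.2.1 i.2.2), hcard]

lemma gaussianReal_map_standardize (a : ℝ) {v : ℝ≥0} (hv : v ≠ 0) :
    (gaussianReal a v).map (fun x => (x - a) / √v) = gaussianReal 0 1 := by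
  have hcomp : (fun x => (x - a) / √v) = (· / √v) ∘ (· - a) := rfl
  rw [hcomp, ← Measure.map_map (by fun_prop) (by fun_prop), gaussianReal_map_sub_const,
    gaussianReal_map_div_const, sub_self, zero_div]
  congr
  ext
  simp [Real.sq_sqrt, hv]

lemma toReal_gaussianReal_Iic_eq_stdCDF (a : ℝ) {v : ℝ≥0} (hv : v ≠ 0) (c : ℝ) :
    (gaussianReal a v (Set.Iic c)).toReal = stdCDF ((c - a) / √v) := by
  have hs : 0 < √(v : ℝ) := Real.sqrt_pos.2 (by positivity)
  rw [stdCDF, ← gaussianReal_map_standardize a hv,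
    Measure.map_apply (by fun_prop) measurableSet_Iic]
  congr 2
  ext x
  simp [div_le_div_iff_of_pos_right hs]

lemma toReal_gaussianReal_Iic_eq_integral (a : ℝ) {v : ℝ≥0} (hv : v ≠ 0) (c : ℝ) :
    (gaussianReal a v (Set.Iic c)).toReal = ∫ u in Set.Iic c, gaussianPDFReal a v u := by
  rw [gaussianReal_apply_eq_integral a hv, ENNReal.toReal_ofReal
    (setIntegral_nonneg measurableSet_Iic fun u _ => gaussianPDFReal_nonneg a v u)]

lemma toReal_measure_sum_Ioc_le_eq_stdCDF {Ω : Type*} [MeasurableSpace Ω] {P : Measure Ω}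
    [IsProbabilityMeasure P] {μ σ : ℝ} (hσ : 0 < σ) {τ t : ℕ} {X : ℕ → Ω → ℝ}
    (hX : ∀ i, Measurable (X i)) (hindep : iIndepFun (fun i : ↥(Set.Ioc τ t) => X i) P)
    (hlaw : ∀ i, τ < i → i ≤ t → P.map (X i) = gaussianReal μ (σ ^ 2).toNNReal)
    {m : ℕ} (hm : 0 < m) (hmt : τ + m ≤ t) :
    (P {ω | ∑ i ∈ Ioc τ (τ + m), X i ω ≤ μ * m / 2}).toReal
      = stdCDF (-(μ * √m) / (2 * σ)) := by
  have hv : (m : ℝ≥0) * (σ ^ 2).toNNReal ≠ 0 :=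
    mul_ne_zero (Nat.cast_ne_zero.2 hm.ne') (by simp [hσ.ne'])
  have hsqrt : √(((m : ℝ≥0) * (σ ^ 2).toNNReal : ℝ≥0) : ℝ) = √m * σ := by
    rw [NNReal.coe_mul, NNReal.coe_natCast, Real.coe_toNNReal _ (sq_nonneg σ),
      sqrt_mul m.cast_nonneg, sqrt_sq hσ.le]
  have hm_sqrt : 0 < √(m : ℝ) := sqrt_pos.2 (Nat.cast_pos.2 hm)
  change (P ((fun ω => ∑ i ∈ Ioc τ (τ + m), X i ω) ⁻¹' Set.Iic _)).toReal = _
  rw [← Measure.map_apply (by fun_prop) measurableSet_Iic,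
    map_sum_Ioc_eq_gaussianReal hX hindep hlaw hmt, toReal_gaussianReal_Iic_eq_stdCDF _ hv, hsqrt]
  congr 1
  field_simp
  rw [sq_sqrt m.cast_nonneg]
  ring

lemma pS_add (x : ℕ → ℝ) (τ m : ℕ) : pS x (τ + m) = pS x τ + ∑ i ∈ Ioc τ (τ + m), x i := by
  have hIcc (n : ℕ) : Icc 1 n = Ioc 0 n := Icc_add_one_left_eq_Ioc 0 n
  simp only [pS, hIcc]
  exact (sum_Ioc_consecutive x (Nat.zero_le τ) (Nat.le_add_right τ m)).symm

lemma cusumV_add_sub_cusumV (μ : ℝ) (x : ℕ → ℝ) (t τ m : ℕ) :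
    cusumV μ x t (τ + m) - cusumV μ x t τ = (μ / 2 * m - ∑ i ∈ Ioc τ (τ + m), x i) * μ := by
  rw [cusumV, cusumV, pS_add]
  push_cast
  ring

lemma exists_sum_Ioc_le_of_le_iSup_cusumV {μ ε : ℝ} (hμ : 0 < μ) (hε : 0 < ε) {τ t : ℕ}
    (hτt : τ ≤ t) (x : ℕ → ℝ)
    (h : cusumV μ x t τ + ε ≤ ⨆ k : (Icc τ t : Finset ℕ), cusumV μ x t k) :
    ∃ m ∈ Icc 1 (t - τ), ∑ i ∈ Ioc τ (τ + m), x i ≤ μ * m / 2 := by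
  have : Nonempty (Icc τ t : Finset ℕ) := ⟨⟨τ, mem_Icc.2 ⟨le_rfl, hτt⟩⟩⟩
  obtain ⟨⟨k, hk⟩, hkmax⟩ := exists_eq_ciSup_of_finite
    (f := fun k : (Icc τ t : Finset ℕ) => cusumV μ x t k)
  obtain ⟨hτk, hkt⟩ := mem_Icc.1 hk
  obtain ⟨m, rfl⟩ := Nat.exists_eq_add_of_le hτk
  have hgain := cusumV_add_sub_cusumV μ x t τ m
  have hpos : 0 < (μ / 2 * m - ∑ i ∈ Ioc τ (τ + m), x i) * μ := by
    simp only at hkmax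
    linarith
  have hm : m ≠ 0 := by
    rintro rfl
    simp at hpos
  refine ⟨m, mem_Icc.2 ⟨Nat.one_le_iff_ne_zero.2 hm, by omega⟩, ?_⟩
  nlinarith [pos_of_mul_pos_left hpos hμ.le]

lemma toReal_measure_le_iSup_cusumV_le_sum_stdCDF {μ σ ε : ℝ} (hμ : 0 < μ) (hσ : 0 < σ) (hε : 0 < ε)
    {τ t : ℕ} (hτt : τ ≤ t) {Ω : Type*} [MeasurableSpace Ω] {P : Measure Ω}
    [IsProbabilityMeasure P] {X : ℕ → Ω → ℝ} (hX : ∀ i, Measurable (X i))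
    (hindep : iIndepFun (fun i : ↥(Set.Ioc τ t) => X i) P)
    (hlaw : ∀ i, τ < i → i ≤ t → P.map (X i) = gaussianReal μ (σ ^ 2).toNNReal) :
    (P {ω | cusumV μ (fun i => X i ω) t τ + ε ≤
        ⨆ k : (Icc τ t : Finset ℕ), cusumV μ (fun i => X i ω) t k}).toReal ≤
      ∑ m ∈ Icc 1 (t - τ), stdCDF (-(μ * √m) / (2 * σ)) := by
  have hcover : {ω | cusumV μ (fun i => X i ω) t τ + ε ≤
        ⨆ k : (Icc τ t : Finset ℕ), cusumV μ (fun i => X i ω) t k} ⊆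
      ⋃ m ∈ Icc 1 (t - τ), {ω | ∑ i ∈ Ioc τ (τ + m), X i ω ≤ μ * m / 2} := fun ω hω => by
    simpa using exists_sum_Ioc_le_of_le_iSup_cusumV hμ hε hτt (fun i => X i ω) hω
  calc P.real _ ≤ P.real (⋃ m ∈ Icc 1 (t - τ), {ω | ∑ i ∈ Ioc τ (τ + m), X i ω ≤ μ * m / 2}) :=
        measureReal_mono hcover (measure_ne_top _ _)
    _ ≤ ∑ m ∈ Icc 1 (t - τ), P.real {ω | ∑ i ∈ Ioc τ (τ + m), X i ω ≤ μ * m / 2} :=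
        measureReal_biUnion_finset_le _ _
    _ = ∑ m ∈ Icc 1 (t - τ), stdCDF (-(μ * √m) / (2 * σ)) := sum_congr rfl fun m hm =>
        toReal_measure_sum_Ioc_le_eq_stdCDF hσ hX hindep hlaw (mem_Icc.1 hm).1
          (by have := (mem_Icc.1 hm).2; omega)

lemma stdCDF_zero : stdCDF 0 = 1 / 2 := by
  set N := gaussianReal 0 1
  have := nullSingletonClass_gaussianReal (μ := 0) one_ne_zero
  have hsymm : N (Set.Ioi 0) = N (Set.Iic 0) := by
    calc N (Set.Ioi 0) = N.map (fun x => -x) (Set.Ioi 0) := by rw [gaussianReal_map_neg, neg_zero]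
      _ = N (Set.Iio 0) := by
        rw [Measure.map_apply measurable_neg measurableSet_Ioi, Set.neg_preimage, Set.neg_Ioi,
          neg_zero]
      _ = N (Set.Iic 0) := measure_congr Iio_ae_eq_Iic
  have htotal : N (Set.Iic 0) + N (Set.Ioi 0) = 1 := by
    rw [← Set.compl_Iic, measure_add_measure_compl measurableSet_Iic, measure_univ]
  rw [hsymm, ← two_mul] at htotal
  rw [stdCDF, eq_div_iff two_ne_zero, mul_comm]
  simpa using congrArg ENNReal.toReal htotal

lemma stdCDF_neg_le (x : ℝ) (hx : 0 ≤ x) : stdCDF (-x) ≤ 1 / 2 * exp (-x ^ 2 / 2) := by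
  have hpdf : ∀ u ∈ Set.Iic (0 : ℝ),
      gaussianPDFReal x 1 u ≤ exp (-x ^ 2 / 2) * gaussianPDFReal 0 1 u := by
    intro u hu
    have : u * x ≤ 0 := mul_nonpos_of_nonpos_of_nonneg hu hx
    simp only [gaussianPDFReal, NNReal.coe_one, mul_one, sub_zero, mul_left_comm _ (_⁻¹),
      ← exp_add]
    gcongr
    nlinarith
  calc stdCDF (-x) = ∫ u in Set.Iic 0, gaussianPDFReal x 1 u := by
        rw [← toReal_gaussianReal_Iic_eq_integral x one_ne_zero, toReal_gaussianReal_Iic_eq_stdCDF x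
          one_ne_zero, NNReal.coe_one, sqrt_one, div_one, zero_sub]
    _ ≤ ∫ u in Set.Iic 0, exp (-x ^ 2 / 2) * gaussianPDFReal 0 1 u :=
        setIntegral_mono_on (integrable_gaussianPDFReal x 1).integrableOn
          ((integrable_gaussianPDFReal 0 1).const_mul _).integrableOn measurableSet_Iic hpdf
    _ = exp (-x ^ 2 / 2) * stdCDF 0 := by
        rw [integral_const_mul, stdCDF, toReal_gaussianReal_Iic_eq_integral 0 one_ne_zero]
    _ = 1 / 2 * exp (-x ^ 2 / 2) := by rw [stdCDF_zero, mul_comm]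

lemma stdCDF_le_half_exp_pow {μ σ : ℝ} (hμ : 0 < μ) (hσ : 0 < σ) (m : ℕ) :
    stdCDF (-(μ * √m) / (2 * σ)) ≤ 1 / 2 * exp (-μ ^ 2 / (8 * σ ^ 2)) ^ m := by
  have hx : 0 ≤ μ * √m / (2 * σ) := by positivity
  have hexp : -(μ * √m / (2 * σ)) ^ 2 / 2 = m * (-μ ^ 2 / (8 * σ ^ 2)) := by
    rw [div_pow, mul_pow, sq_sqrt m.cast_nonneg]
    ring
  rw [neg_div, ← exp_nat_mul, ← hexp]
  exact stdCDF_neg_le _ hx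

lemma sum_stdCDF_le_geometric {μ σ : ℝ} (hμ : 0 < μ) (hσ : 0 < σ) (n : ℕ) :
    ∑ m ∈ Icc 1 n, stdCDF (-(μ * √m) / (2 * σ)) ≤
      1 / 2 * exp (-μ ^ 2 / (8 * σ ^ 2)) / (1 - exp (-μ ^ 2 / (8 * σ ^ 2))) := by
  set r := exp (-μ ^ 2 / (8 * σ ^ 2))
  have hr : r < 1 := exp_lt_one_iff.2 (by rw [neg_div]; exact neg_neg_of_pos (by positivity))
  calc ∑ m ∈ Icc 1 n, stdCDF (-(μ * √m) / (2 * σ))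
      ≤ ∑ m ∈ Ico 1 (n + 1), 1 / 2 * r ^ m := by
        rw [Ico_add_one_right_eq_Icc]
        exact sum_le_sum fun m _ => stdCDF_le_half_exp_pow hμ hσ m
    _ ≤ 1 / 2 * (r ^ 1 / (1 - r)) := by
        rw [← mul_sum]
        gcongr
        exact geom_sum_Ico_le_of_lt_one (exp_nonneg _) hr
    _ = 1 / 2 * r / (1 - r) := by rw [pow_one, mul_div_assoc]

/-- If X_{τ+1},…,X_t are i.i.d. N(μ,σ²), then
P(max_{τ≤k≤t} V_{t,k} ≥ V_{t,τ} + ε) ≤ Σ_{m=1}^{t−τ} Φ(−μ√m/(2σ))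
  ≤ (1/2)·e^{−μ²/(8σ²)}/(1 − e^{−μ²/(8σ²)}). -/
theorem statement16 (μ σ ε : ℝ) (hμ : 0 < μ) (hσ : 0 < σ) (hε : 0 < ε)
    (τ t : ℕ) (hτt : τ ≤ t)
    (Ω : Type*) [MeasurableSpace Ω] (P : Measure Ω) [IsProbabilityMeasure P]
    (X : ℕ → Ω → ℝ) (hXmeas : ∀ i, Measurable (X i))
    (hindep : iIndepFun (fun i : ↥(Set.Ioc τ t) => X (i : ℕ)) P)
    (hlaw : ∀ i, τ < i → i ≤ t → Measure.map (X i) P = gaussianReal μ ((σ ^ 2).toNNReal)) :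
    (P {ω | cusumV μ (fun i => X i ω) t τ + ε ≤
        ⨆ k : (Finset.Icc τ t : Finset ℕ), cusumV μ (fun i => X i ω) t (k : ℕ)}).toReal ≤
      ∑ m ∈ Finset.Icc 1 (t - τ), stdCDF (-(μ * Real.sqrt (m : ℝ)) / (2 * σ))
    ∧ ∑ m ∈ Finset.Icc 1 (t - τ), stdCDF (-(μ * Real.sqrt (m : ℝ)) / (2 * σ)) ≤
        (1 / 2) * Real.exp (-μ ^ 2 / (8 * σ ^ 2)) / (1 - Real.exp (-μ ^ 2 / (8 * σ ^ 2))) :=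
  ⟨toReal_measure_le_iSup_cusumV_le_sum_stdCDF hμ hσ hε hτt hXmeas hindep hlaw,
    sum_stdCDF_le_geometric hμ hσ _⟩

end
end

section
/- Let Z₁ and Z₂ be independent standard normal random variables, let μ > 0, σ > 0, and let τ < v < t be integers. Then P( σZ₁/√(t−v) + μ > (σZ₂/√(v−τ) + μ)·(1 + √(1 + (v−τ)/(t−v))) ) = 1 − Φ( (μ/σ)·√( (t−τ)(v−τ) / ( (v−τ) + (√(t−v) + √(t−τ))² ) ) ) ≤ 1 − Φ( (μ/σ)·√((v−τ)/5) ), where Φ is the standard normal cumulative distribution function. -/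
/-!
Put `A = t - v`, `B = v - τ` and `k = √(1 + B / A) = √(A + B) / √A`. The event is
`μ k < a Z₁ - b Z₂` with `a = σ / √A`, `b = σ (1 + k) / √B`, and by independence `a Z₁ - b Z₂` is
centred normal with variance `a² + b² = σ² (B + (√A + √(A + B))²) / (A B)`; standardizing gives the
equality. The bound holds because `(√A + √(A + B))² ≤ 2 (2A + B)`, so the denominator
`B + (√A + √(A + B))²` is at most `5 (A + B)`.
-/

open MeasureTheory ProbabilityTheory Real
open scoped NNReal

namespace ProbabilityTheory

variable {Ω : Type*} [MeasurableSpace Ω] {P : Measure Ω}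

lemma HasLaw.of_map_eq_gaussianReal {X : Ω → ℝ} {m : ℝ} {v : ℝ≥0}
    (hX : P.map X = gaussianReal m v) : HasLaw X (gaussianReal m v) P :=
  ⟨.of_map_ne_zero (hX ▸ IsProbabilityMeasure.ne_zero _), hX⟩

lemma IndepFun.hasLaw_const_mul_add_const_mul {X Y : Ω → ℝ} {m₁ m₂ : ℝ} {v₁ v₂ : ℝ≥0}
    (hXY : IndepFun X Y P) (hX : HasLaw X (gaussianReal m₁ v₁) P)
    (hY : HasLaw Y (gaussianReal m₂ v₂) P) (a b : ℝ) :
    HasLaw (fun ω ↦ a * X ω + b * Y ω)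
      (gaussianReal (a * m₁ + b * m₂) ⟨a ^ 2 * v₁ + b ^ 2 * v₂, by positivity⟩) P := by
  refine .of_map_eq_gaussianReal <| (gaussianReal_add_gaussianReal_of_indepFun
    (hXY.comp (measurable_const_mul a) (measurable_const_mul b))
    (gaussianReal_const_mul hX a).map_eq (gaussianReal_const_mul hY b).map_eq).trans ?_
  congr

end ProbabilityTheory

lemma stdCDF_eq_cdf : stdCDF = cdf (gaussianReal 0 1) := by
  ext x
  rw [cdf_eq_real, measureReal_def, stdCDF]

lemma monotone_stdCDF : Monotone stdCDF :=
  stdCDF_eq_cdf ▸ monotone_cdf _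

lemma gaussianReal_real_Ioi {v : ℝ≥0} (hv : v ≠ 0) (c : ℝ) :
    (gaussianReal 0 v).real (Set.Ioi c) = 1 - stdCDF (c / √v) := by
  have hsqrt : 0 < √(v : ℝ) := Real.sqrt_pos.mpr (by positivity)
  have hscale : HasLaw (fun x ↦ √(v : ℝ) * x) (gaussianReal 0 v) (gaussianReal 0 1) := by
    convert gaussianReal_const_mul (HasLaw.id (μ := gaussianReal 0 1)) √(v : ℝ) using 2 <;> simp
  have hpre : {x : ℝ | c < √(v : ℝ) * x} = (Set.Iic (c / √v))ᶜ := by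
    ext x; simp [div_lt_iff₀' hsqrt]
  calc (gaussianReal 0 v).real (Set.Ioi c)
      = (gaussianReal 0 1).real {x | c < √(v : ℝ) * x} :=
        (hscale.measureReal_eq (p := (c < ·)) measurableSet_Ioi).symm
    _ = 1 - stdCDF (c / √v) := by
        rw [hpre, probReal_compl_eq_one_sub measurableSet_Iic, stdCDF, measureReal_def]

lemma sqrt_one_add_div_eq {A B : ℝ} (hA : 0 < A) : √(1 + B / A) = √(A + B) / √A := by
  rw [← Real.sqrt_div' _ hA.le, add_div, div_self hA.ne']

lemma standardized_threshold_eq (μ : ℝ) {σ A B : ℝ} (hσ : 0 < σ) (hA : 0 < A) (hB : 0 < B) :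
    μ * √(1 + B / A) / √((σ / √A) ^ 2 + (σ * (1 + √(1 + B / A)) / √B) ^ 2)
      = μ / σ * √((A + B) * B / (B + (√A + √(A + B)) ^ 2)) := by
  have hprod : (A + B) * B = (√(A + B) * √B) ^ 2 := by
    rw [mul_pow, Real.sq_sqrt (by positivity), Real.sq_sqrt hB.le]
  rw [sqrt_one_add_div_eq hA, hprod]
  set s := √A
  set r := √(A + B)
  set q := √B
  have hs : 0 < s := Real.sqrt_pos.mpr hA
  have hq : 0 < q := Real.sqrt_pos.mpr hB
  have hq2 : q ^ 2 = B := Real.sq_sqrt hB.le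
  have hvar : (σ / s) ^ 2 + (σ * (1 + r / s) / q) ^ 2
      = (σ / (s * q)) ^ 2 * (B + (s + r) ^ 2) := by
    field_simp
    rw [hq2]
  rw [hvar, Real.sqrt_mul' _ (by positivity), Real.sqrt_sq (by positivity),
    Real.sqrt_div' _ (by positivity), Real.sqrt_sq (by positivity)]
  field_simp

lemma div_five_le_mul_div_add_sq_sqrt {A B : ℝ} (hA : 0 < A) (hB : 0 < B) :
    B / 5 ≤ (A + B) * B / (B + (√A + √(A + B)) ^ 2) := by
  have hD : (√A + √(A + B)) ^ 2 ≤ 2 * (A + (A + B)) := by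
    simpa [Real.sq_sqrt hA.le, Real.sq_sqrt (by positivity : 0 ≤ A + B)] using
      add_sq_le (a := √A) (b := √(A + B))
  rw [div_le_div_iff₀ (by norm_num) (by positivity)]
  nlinarith

lemma measureReal_mul_one_add_sqrt_lt_eq {Ω : Type*} [MeasurableSpace Ω] {P : Measure Ω}
    {Z₁ Z₂ : Ω → ℝ} (hind : IndepFun Z₁ Z₂ P) (h1 : P.map Z₁ = gaussianReal 0 1)
    (h2 : P.map Z₂ = gaussianReal 0 1) (μ : ℝ) {σ A B : ℝ} (hσ : 0 < σ) (hA : 0 < A)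
    (hB : 0 < B) :
    P.real {ω | (σ * Z₂ ω / √B + μ) * (1 + √(1 + B / A)) < σ * Z₁ ω / √A + μ}
      = 1 - stdCDF (μ / σ * √((A + B) * B / (B + (√A + √(A + B)) ^ 2))) := by
  set k := √(1 + B / A)
  set a := σ / √A
  set b := σ * (1 + k) / √B
  have hlaw := hind.hasLaw_const_mul_add_const_mul (.of_map_eq_gaussianReal h1)
    (.of_map_eq_gaussianReal h2) a (-b)
  simp only [mul_zero, add_zero, NNReal.coe_one, mul_one, neg_sq] at hlaw
  have hevent : {ω | (σ * Z₂ ω / √B + μ) * (1 + k) < σ * Z₁ ω / √A + μ}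
      = {ω | μ * k < a * Z₁ ω + -b * Z₂ ω} := by
    ext ω
    have hdiff : a * Z₁ ω + -b * Z₂ ω - μ * k
        = σ * Z₁ ω / √A + μ - (σ * Z₂ ω / √B + μ) * (1 + k) := by ring
    simp only [Set.mem_ofPred_eq]
    rw [← sub_pos, ← hdiff, sub_pos]
  have hvar_ne : (⟨a ^ 2 + b ^ 2, by positivity⟩ : ℝ≥0) ≠ 0 :=
    Subtype.coe_ne_coe.mp (add_pos_of_pos_of_nonneg
      (pow_pos (div_pos hσ (Real.sqrt_pos.mpr hA)) 2) (sq_nonneg _)).ne'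
  rw [hevent, hlaw.measureReal_eq (p := (μ * k < ·)) measurableSet_Ioi, Set.Ioi_def,
    gaussianReal_real_Ioi hvar_ne, ← standardized_threshold_eq μ hσ hA hB]
  rfl

theorem statement17_general (μ σ : ℝ) (hμ : 0 < μ) (hσ : 0 < σ) (τ v t : ℤ)
    (hτv : τ < v) (hvt : v < t)
    (Ω : Type*) [MeasurableSpace Ω] (P : Measure Ω)
    (Z₁ Z₂ : Ω → ℝ)
    (hind : IndepFun Z₁ Z₂ P)
    (h1 : Measure.map Z₁ P = gaussianReal 0 1)
    (h2 : Measure.map Z₂ P = gaussianReal 0 1) :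
    (P {ω | (σ * Z₂ ω / Real.sqrt ((v : ℝ) - (τ : ℝ)) + μ) *
          (1 + Real.sqrt (1 + ((v : ℝ) - (τ : ℝ)) / ((t : ℝ) - (v : ℝ))))
        < σ * Z₁ ω / Real.sqrt ((t : ℝ) - (v : ℝ)) + μ}).toReal
      = 1 - stdCDF ((μ / σ) * Real.sqrt (((t : ℝ) - (τ : ℝ)) * ((v : ℝ) - (τ : ℝ)) /
          (((v : ℝ) - (τ : ℝ)) +
            (Real.sqrt ((t : ℝ) - (v : ℝ)) + Real.sqrt ((t : ℝ) - (τ : ℝ))) ^ 2)))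
    ∧ 1 - stdCDF ((μ / σ) * Real.sqrt (((t : ℝ) - (τ : ℝ)) * ((v : ℝ) - (τ : ℝ)) /
          (((v : ℝ) - (τ : ℝ)) +
            (Real.sqrt ((t : ℝ) - (v : ℝ)) + Real.sqrt ((t : ℝ) - (τ : ℝ))) ^ 2)))
      ≤ 1 - stdCDF ((μ / σ) * Real.sqrt (((v : ℝ) - (τ : ℝ)) / 5)) := by
  have hA : (0 : ℝ) < t - v := sub_pos.mpr (by exact_mod_cast hvt)
  have hB : (0 : ℝ) < v - τ := sub_pos.mpr (by exact_mod_cast hτv)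
  rw [show (t : ℝ) - τ = (t - v) + (v - τ) by ring, ← measureReal_def]
  refine ⟨measureReal_mul_one_add_sqrt_lt_eq hind h1 h2 μ hσ hA hB, ?_⟩
  exact sub_le_sub_left (monotone_stdCDF (mul_le_mul_of_nonneg_left
    (Real.sqrt_le_sqrt (div_five_le_mul_div_add_sq_sqrt hA hB)) (by positivity))) 1

/-- For independent standard normal Z₁, Z₂, μ > 0, σ > 0 and
integers τ < v < t:
P(σZ₁/√(t−v) + μ > (σZ₂/√(v−τ) + μ)(1 + √(1+(v−τ)/(t−v))))
  = 1 − Φ((μ/σ)√((t−τ)(v−τ)/((v−τ)+(√(t−v)+√(t−τ))²)))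
  ≤ 1 − Φ((μ/σ)√((v−τ)/5)). -/
theorem statement17 (μ σ : ℝ) (hμ : 0 < μ) (hσ : 0 < σ) (τ v t : ℤ)
    (hτv : τ < v) (hvt : v < t)
    (Ω : Type*) [MeasurableSpace Ω] (P : Measure Ω) [IsProbabilityMeasure P]
    (Z₁ Z₂ : Ω → ℝ) (h1meas : Measurable Z₁) (h2meas : Measurable Z₂)
    (hind : IndepFun Z₁ Z₂ P)
    (h1 : Measure.map Z₁ P = gaussianReal 0 1)
    (h2 : Measure.map Z₂ P = gaussianReal 0 1) :
    (P {ω | (σ * Z₂ ω / Real.sqrt ((v : ℝ) - (τ : ℝ)) + μ) *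
          (1 + Real.sqrt (1 + ((v : ℝ) - (τ : ℝ)) / ((t : ℝ) - (v : ℝ))))
        < σ * Z₁ ω / Real.sqrt ((t : ℝ) - (v : ℝ)) + μ}).toReal
      = 1 - stdCDF ((μ / σ) * Real.sqrt (((t : ℝ) - (τ : ℝ)) * ((v : ℝ) - (τ : ℝ)) /
          (((v : ℝ) - (τ : ℝ)) +
            (Real.sqrt ((t : ℝ) - (v : ℝ)) + Real.sqrt ((t : ℝ) - (τ : ℝ))) ^ 2)))
    ∧ 1 - stdCDF ((μ / σ) * Real.sqrt (((t : ℝ) - (τ : ℝ)) * ((v : ℝ) - (τ : ℝ)) /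
          (((v : ℝ) - (τ : ℝ)) +
            (Real.sqrt ((t : ℝ) - (v : ℝ)) + Real.sqrt ((t : ℝ) - (τ : ℝ))) ^ 2)))
      ≤ 1 - stdCDF ((μ / σ) * Real.sqrt (((v : ℝ) - (τ : ℝ)) / 5)) :=
  statement17_general μ σ hμ hσ τ v t hτv hvt Ω P Z₁ Z₂ hind h1 h2
end
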